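/- arXiv:2002.06804 — 10 statements merged into one kernel-verified Lean document; each statement's English description precedes it below -/
import Mathlib

section
/- Let F be a family of k intervals of length k in Z/nZ, and let G be a family of intervals of length a ≤ n - k such that every interval in F intersects every interval in G (F and G are cross-intersecting). Then G contains at most a intervals. -/
namespace CrossIntAux

variable {n : ℕ} [NeZero n]

/-- The interval of length `r` starting at `b` in `ZMod n`. -/
def itv (b : ZMod n) (r : ℕ) : Finset (ZMod n) :=
  (Finset.range r).image (fun j : ℕ => b + (j : ZMod n))

omit [NeZero n] in
lemma mem_itv {b x : ZMod n} {r : ℕ} : x ∈ itv b r ↔ ∃ j < r, x = b + (j : ZMod n) := by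
  simp [itv, eq_comm]

lemma closed_eq_univ (S : Finset (ZMod n)) (hne : S.Nonempty)
    (hcl : ∀ x ∈ S, x + 1 ∈ S) : S = Finset.univ := by
  obtain ⟨s, hs⟩ := hne
  have key : ∀ j : ℕ, s + (j : ZMod n) ∈ S := by
    intro j
    induction j with
    | zero => simpa using hs
    | succ j ih =>
        have : s + ((j + 1 : ℕ) : ZMod n) = (s + (j : ZMod n)) + 1 := by
          push_cast; ring
        rw [this]
        exact hcl _ ih
  apply Finset.eq_univ_of_forall
  intro x
  have := key (x - s).val
  rwa [ZMod.natCast_val, ZMod.cast_id, add_sub_cancel] at this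

omit [NeZero n] in
lemma biUnion_succ (B : Finset (ZMod n)) (m : ℕ) (hm : 1 ≤ m) :
    B.biUnion (fun b => itv b (m + 1)) =
      B.biUnion (fun b => itv b m) ∪ (B.biUnion (fun b => itv b m)).image (· + 1) := by
  ext x
  simp only [Finset.mem_union, Finset.mem_biUnion, Finset.mem_image, mem_itv]
  constructor
  · rintro ⟨b, hb, j, hj, rfl⟩
    rcases Nat.lt_or_ge j m with hjm | hjm
    · exact Or.inl ⟨b, hb, j, hjm, rfl⟩
    · refine Or.inr ⟨b + ((j - 1 : ℕ) : ZMod n), ⟨b, hb, j - 1, by omega, rfl⟩, ?_⟩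
      have : ((j : ℕ) : ZMod n) = ((j - 1 : ℕ) : ZMod n) + 1 := by
        conv_lhs => rw [show j = (j - 1) + 1 by omega]
        push_cast; ring
      rw [this]; ring
  · rintro (⟨b, hb, j, hj, rfl⟩ | ⟨y, ⟨b, hb, j, hj, rfl⟩, rfl⟩)
    · exact ⟨b, hb, j, by omega, rfl⟩
    · refine ⟨b, hb, j + 1, by omega, ?_⟩
      push_cast; ring

lemma card_biUnion_itv (B : Finset (ZMod n)) (hB : B.Nonempty) :
    ∀ m, 1 ≤ m → min n (B.card + m - 1) ≤ (B.biUnion (fun b => itv b m)).card := by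
  intro m
  induction m with
  | zero => omega
  | succ m ih =>
      intro _
      rcases Nat.lt_or_ge m 1 with hm | hm
      · -- m = 0, so m+1 = 1 : the biUnion is just B
        have hm0 : m = 0 := by omega
        subst hm0
        have : B.biUnion (fun b => itv b 1) = B := by
          ext x
          simp [mem_itv]
        rw [this]
        simp
      · have hS : min n (B.card + m - 1) ≤ (B.biUnion (fun b => itv b m)).card := ih hm
        set S := B.biUnion (fun b => itv b m) with hSdef
        have hsub : S ⊆ B.biUnion (fun b => itv b (m + 1)) := by
          intro x hx
          rw [hSdef, Finset.mem_biUnion] at hx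
          obtain ⟨b, hb, hx⟩ := hx
          rw [mem_itv] at hx
          obtain ⟨j, hj, rfl⟩ := hx
          rw [Finset.mem_biUnion]
          exact ⟨b, hb, mem_itv.2 ⟨j, by omega, rfl⟩⟩
        by_cases hcl : ∀ x ∈ S, x + 1 ∈ S
        · have hSne : S.Nonempty := by
            obtain ⟨b, hb⟩ := hB
            exact ⟨b, Finset.mem_biUnion.2 ⟨b, hb, mem_itv.2 ⟨0, by omega, by simp⟩⟩⟩
          have hU : S = Finset.univ := closed_eq_univ S hSne hcl
          have : B.biUnion (fun b => itv b (m + 1)) = Finset.univ :=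
            Finset.eq_univ_of_forall fun x => hsub (hU ▸ Finset.mem_univ x)
          rw [this]
          simp [Finset.card_univ, ZMod.card]
        · push_neg at hcl
          obtain ⟨x, hxS, hx1⟩ := hcl
          have hx1mem : x + 1 ∈ B.biUnion (fun b => itv b (m + 1)) := by
            rw [biUnion_succ B m hm]
            exact Finset.mem_union_right _ (Finset.mem_image.2 ⟨x, hxS, rfl⟩)
          have : insert (x + 1) S ⊆ B.biUnion (fun b => itv b (m + 1)) := by
            intro y hy
            rcases Finset.mem_insert.1 hy with rfl | hy
            · exact hx1mem
            · exact hsub hy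
          have hcard := Finset.card_le_card this
          rw [Finset.card_insert_of_notMem hx1] at hcard
          omega

end CrossIntAux

open CrossIntAux in
/-- **Cross-intersecting families of intervals in `ℤ/nℤ`.** If `F` is a family of `k`
intervals of length `k` in `ℤ/nℤ` and `G` is a family of intervals of length `a ≤ n - k`
such that every interval of `F` meets every interval of `G`, then `G` has at most `a`
members. -/
theorem cross_intersecting_intervals_card_bound (n a k : ℕ) [NeZero n]
    (ha : 0 < a) (hk : 0 < k) (han : a ≤ n - k)
    (F G : Finset (Finset (ZMod n)))
    (hF : ∀ I ∈ F, ∃ b : ZMod n,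
      I = Finset.image (fun j : ℕ => b + (j : ZMod n)) (Finset.range k))
    (hFcard : F.card = k)
    (hG : ∀ J ∈ G, ∃ c : ZMod n,
      J = Finset.image (fun j : ℕ => c + (j : ZMod n)) (Finset.range a))
    (hcross : ∀ I ∈ F, ∀ J ∈ G, (I ∩ J).Nonempty) :
    G.card ≤ a := by
  classical
  have hn : a + k ≤ n := by omega
  set m : ℕ := n - a - k + 1 with hm
  have hm1 : 1 ≤ m := by omega
  -- start points of G and F
  set C : Finset (ZMod n) := Finset.univ.filter
    (fun c => (Finset.range a).image (fun j : ℕ => c + (j : ZMod n)) ∈ G) with hC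
  set B : Finset (ZMod n) := Finset.univ.filter
    (fun b => (Finset.range k).image (fun j : ℕ => b + (j : ZMod n)) ∈ F) with hB
  have hGC : G.card ≤ C.card := by
    have hsub : G ⊆ C.image (fun c => (Finset.range a).image (fun j : ℕ => c + (j : ZMod n))) := by
      intro J hJ
      obtain ⟨c, rfl⟩ := hG J hJ
      exact Finset.mem_image.2 ⟨c, Finset.mem_filter.2 ⟨Finset.mem_univ c, hJ⟩, rfl⟩
    calc G.card ≤ _ := Finset.card_le_card hsub
      _ ≤ C.card := Finset.card_image_le
  have hkB : k ≤ B.card := by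
    have hsub : F ⊆ B.image (fun b => (Finset.range k).image (fun j : ℕ => b + (j : ZMod n))) := by
      intro I hI
      obtain ⟨b, rfl⟩ := hF I hI
      exact Finset.mem_image.2 ⟨b, Finset.mem_filter.2 ⟨Finset.mem_univ b, hI⟩, rfl⟩
    calc k = F.card := hFcard.symm
      _ ≤ _ := Finset.card_le_card hsub
      _ ≤ B.card := Finset.card_image_le
  have hBne : B.Nonempty := by
    rw [← Finset.card_pos]; omega
  -- the forbidden union
  set B2 : Finset (ZMod n) := B.image (fun b => b + ((k : ℕ) : ZMod n)) with hB2
  have hB2card : B2.card = B.card := Finset.card_image_of_injective _ (add_left_injective _)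
  set U : Finset (ZMod n) := B2.biUnion (fun b => itv b m) with hU
  have hUcard : n - a ≤ U.card := by
    have := card_biUnion_itv B2 (hBne.image _) m hm1
    rw [← hU] at this
    have hmin : n - a ≤ min n (B2.card + m - 1) := by
      rw [hB2card]; omega
    omega
  -- C and U are disjoint
  have hdisj : Disjoint C U := by
    rw [Finset.disjoint_left]
    intro c hcC hcU
    rw [hU, Finset.mem_biUnion] at hcU
    obtain ⟨b2, hb2, hc⟩ := hcU
    rw [hB2, Finset.mem_image] at hb2
    obtain ⟨b, hbB, rfl⟩ := hb2
    rw [mem_itv] at hc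
    obtain ⟨t, ht, rfl⟩ := hc
    rw [hB, Finset.mem_filter] at hbB
    rw [hC, Finset.mem_filter] at hcC
    have hne := hcross _ hbB.2 _ hcC.2
    obtain ⟨x, hx⟩ := hne
    rw [Finset.mem_inter] at hx
    obtain ⟨hx1, hx2⟩ := hx
    rw [Finset.mem_image] at hx1 hx2
    obtain ⟨i, hi, rfl⟩ := hx1
    obtain ⟨j, hj, hxe⟩ := hx2
    rw [Finset.mem_range] at hi hj
    -- b + i = (b + k + t) + j
    have heq : ((i : ℕ) : ZMod n) = (((k + t + j : ℕ)) : ZMod n) := by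
      have := hxe
      push_cast at this ⊢
      linear_combination -this
    have hval := congrArg ZMod.val heq
    rw [ZMod.val_cast_of_lt (by omega), ZMod.val_cast_of_lt (by omega)] at hval
    omega
  have htotal : C.card + U.card ≤ n := by
    have h1 : (C ∪ U).card = C.card + U.card := Finset.card_union_of_disjoint hdisj
    have h2 : (C ∪ U).card ≤ Fintype.card (ZMod n) := Finset.card_le_univ _
    rw [ZMod.card] at h2
    omega
  omega
end

section
/- Let β_1, β_2, ... be iid Bernoulli(p) random variables and let γ = (c_i) be a nonnegative sequence summing to 1 with infinitely many nonzero terms. Then the random variable S_γ = Σ c_i β_i is non-atomic, i.e., P(S_γ = s) = 0 for every real s. -/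
open MeasureTheory ProbabilityTheory Filter Topology

/-!
Since `c i → 0` and infinitely many `c i` are nonzero, for every `n` one can pick `n` indices
whose coefficients have pairwise distinct subset sums: add each new index with a coefficient
smaller than every gap between the subset sums obtained so far. Split `S` into the finite sum
`X` over these indices and the remainder `Y`, which is independent of `X`. Every atom of `X + Y`
is at most the largest atom of `X`, and since distinct subset sums let `X` determine the `n`
Bernoulli values, the atoms of `X` have mass at most `max p (1 - p) ^ n`. Let `n → ∞`.
-/

section SubsetSums

variable {ι E : Type*} [NormedAddCommGroup E] {c : ι → E}

lemma Finset.injOn_sum_powerset_insert [DecidableEq ι] {F : Finset ι} {i : ι} (hi : i ∉ F)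
    (hci : c i ≠ 0) (hF : Set.InjOn (fun A => ∑ j ∈ A, c j) F.powerset)
    (hsep : ∀ A ∈ F.powerset, ∀ B ∈ F.powerset, A ≠ B →
      ‖c i‖ < ‖∑ j ∈ A, c j - ∑ j ∈ B, c j‖) :
    Set.InjOn (fun A => ∑ j ∈ A, c j) (insert i F).powerset := by
  have sum_insert : ∀ A ∈ F.powerset, ∑ j ∈ insert i A, c j = c i + ∑ j ∈ A, c j :=
    fun A hA => Finset.sum_insert fun hiA => hi (Finset.mem_powerset.1 hA hiA)
  rw [Finset.powerset_insert, Finset.coe_union, Finset.coe_image, Set.injOn_union]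
  · refine ⟨hF, ?_, ?_⟩
    · rintro _ ⟨A, hA, rfl⟩ _ ⟨B, hB, rfl⟩ hAB
      simp only [sum_insert A hA, sum_insert B hB, add_right_inj] at hAB
      rw [hF hA hB hAB]
    · rintro A hA _ ⟨B, hB, rfl⟩ hAB
      simp only [sum_insert B hB] at hAB
      by_cases hAB' : A = B
      · subst hAB'
        exact hci (by simpa using hAB.symm)
      · have hgap := hsep A hA B hB hAB'
        rw [hAB, add_sub_cancel_right] at hgap
        exact hgap.false
  · rw [Set.disjoint_left]
    rintro A hA ⟨B, -, rfl⟩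
    exact hi (Finset.mem_powerset.1 hA (Finset.mem_insert_self i B))

lemma exists_finset_card_eq_injOn_sum_powerset (hc : Tendsto c cofinite (𝓝 0))
    (hinf : {i | c i ≠ 0}.Infinite) (n : ℕ) :
    ∃ F : Finset ι, F.card = n ∧ Set.InjOn (fun A => ∑ j ∈ A, c j) F.powerset := by
  classical
  induction n with
  | zero => exact ⟨∅, rfl, by simp⟩
  | succ n ih =>
    obtain ⟨F, hcard, hF⟩ := ih
    have hsmall : ∀ᶠ i in cofinite, ∀ A ∈ F.powerset, ∀ B ∈ F.powerset, A ≠ B →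
        ‖c i‖ < ‖∑ j ∈ A, c j - ∑ j ∈ B, c j‖ := by
      simp only [Filter.eventually_all_finset]
      intro A hA B hB
      by_cases hAB : A = B
      · simp [hAB]
      · have hpos : 0 < ‖∑ j ∈ A, c j - ∑ j ∈ B, c j‖ :=
          norm_pos_iff.2 (sub_ne_zero.2 fun h => hAB (hF hA hB h))
        filter_upwards [(tendsto_zero_iff_norm_tendsto_zero.1 hc).eventually (gt_mem_nhds hpos)]
          with i hi _ using hi
    obtain ⟨i, hci, hi, hsep⟩ := ((frequently_cofinite_iff_infinite.2 hinf).and_eventually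
      (F.eventually_cofinite_notMem.and hsmall)).exists
    exact ⟨insert i F, by rw [Finset.card_insert_of_notMem hi, hcard],
      Finset.injOn_sum_powerset_insert hi hci hF hsep⟩

end SubsetSums

lemma measurable_biSup_comap {Ω ι E : Type*} [MeasurableSpace E] {β : ι → Ω → E} {S : Set ι}
    {i : ι} (hi : i ∈ S) : Measurable[⨆ j ∈ S, MeasurableSpace.comap (β j) ‹_›] (β i) :=
  Measurable.of_comap_le (le_iSup₂ (f := fun j (_ : j ∈ S) => MeasurableSpace.comap (β j) _) i hi)

namespace ProbabilityTheory

variable {Ω : Type*} [MeasurableSpace Ω] {μ : Measure Ω}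

lemma iIndepFun.indepFun_of_measurable_biSup {ι E α γ : Type*} [MeasurableSpace E]
    [MeasurableSpace α] [MeasurableSpace γ] {β : ι → Ω → E} (hindep : iIndepFun β μ)
    (hmeas : ∀ i, Measurable (β i)) {S T : Set ι} (hST : Disjoint S T) {X : Ω → α} {Y : Ω → γ}
    (hX : Measurable[⨆ i ∈ S, MeasurableSpace.comap (β i) ‹_›] X)
    (hY : Measurable[⨆ i ∈ T, MeasurableSpace.comap (β i) ‹_›] Y) :
    IndepFun X Y μ :=
  (IndepFun_iff_Indep X Y μ).2 <| indep_of_indep_of_le_right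
    (indep_of_indep_of_le_left
      (indep_iSup_of_disjoint (fun i => (hmeas i).comap_le) hindep.iIndep hST) hX.comap_le)
    hY.comap_le

lemma iIndepFun.indepFun_sum_tsum_compl {ι : Type*} [Countable ι] {β : ι → Ω → ℝ}
    (hindep : iIndepFun β μ) (hmeas : ∀ i, Measurable (β i)) (c : ι → ℝ) (F : Finset ι) :
    IndepFun (fun ω => ∑ i ∈ F, c i * β i ω) (fun ω => ∑' i : ((F : Set ι)ᶜ : Set ι), c i * β i ω)
      μ :=
  hindep.indepFun_of_measurable_biSup hmeas disjoint_compl_right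
    (Finset.measurable_sum _ fun i hi => (measurable_biSup_comap hi).const_mul (c i))
    -- the sub-σ-algebra is not the ambient instance, so it has to be passed by hand
    (@Measurable.tsum _ _ _ (_) _ _ _ _ _ _ _ _ _ _ _ _
      fun i => (measurable_biSup_comap i.2).const_mul (c i))

lemma measure_add_eq_le_of_indepFun [IsProbabilityMeasure μ] {G : Type*} [AddGroup G]
    [MeasurableSpace G] [MeasurableSingletonClass G] [MeasurableAdd₂ G] {X Y : Ω → G}
    (hXY : IndepFun X Y μ) (hX : Measurable X) (hY : Measurable Y) {C : ENNReal}
    (hC : ∀ x, μ {ω | X ω = x} ≤ C) (s : G) : μ {ω | X ω + Y ω = s} ≤ C := by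
  have hD : MeasurableSet {q : G × G | q.1 + q.2 = s} :=
    measurable_add (measurableSet_singleton s)
  calc μ {ω | X ω + Y ω = s}
      = μ.map (fun ω => (X ω, Y ω)) {q | q.1 + q.2 = s} := by
        rw [Measure.map_apply (hX.prodMk hY) hD]; rfl
    _ = ∫⁻ y, μ.map X {x | x + y = s} ∂μ.map Y := by
        rw [(indepFun_iff_map_prod_eq_prod_map_map hX.aemeasurable hY.aemeasurable).1 hXY,
          Measure.prod_apply_symm hD]
        rfl
    _ ≤ ∫⁻ _, C ∂μ.map Y := lintegral_mono fun y => by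
        have hslice : {x | x + y = s} = {s - y} := by ext; simp [eq_sub_iff_add_eq]
        rw [hslice, Measure.map_apply hX (measurableSet_singleton _)]
        exact hC (s - y)
    _ = C := by
        rw [lintegral_const, Measure.map_apply hY MeasurableSet.univ]
        simp

lemma measure_sum_mul_eq_le_pow {ι : Type*} {β : ι → Ω → ℝ} (hindep : iIndepFun β μ)
    (hval : ∀ i ω, β i ω = 0 ∨ β i ω = 1) {M : ENNReal} (hM : ∀ i x, μ {ω | β i ω = x} ≤ M)
    {c : ι → ℝ} {F : Finset ι} (hF : Set.InjOn (fun A => ∑ i ∈ A, c i) F.powerset) (x : ℝ) :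
    μ {ω | ∑ i ∈ F, c i * β i ω = x} ≤ M ^ F.card := by
  classical
  rcases Set.eq_empty_or_nonempty {ω | ∑ i ∈ F, c i * β i ω = x} with hempty | ⟨ω₀, hω₀⟩
  · simp [hempty]
  have sum_eq : ∀ ω, ∑ i ∈ F, c i * β i ω = ∑ i ∈ F with β i ω = 1, c i := fun ω => by
    rw [Finset.sum_filter]
    exact Finset.sum_congr rfl fun i _ => by rcases hval i ω with h | h <;> simp [h]
  have hpattern : {ω | ∑ i ∈ F, c i * β i ω = x} ⊆ ⋂ i ∈ F, {ω | β i ω = β i ω₀} := by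
    intro ω hω
    have hfilter : {i ∈ F | β i ω = 1} = {i ∈ F | β i ω₀ = 1} :=
      hF (Finset.mem_coe.2 (Finset.mem_powerset.2 (Finset.filter_subset _ F)))
        (Finset.mem_coe.2 (Finset.mem_powerset.2 (Finset.filter_subset _ F)))
        (by simpa only [sum_eq] using hω.trans hω₀.symm)
    refine Set.mem_iInter₂.2 fun i hi => ?_
    have hiff := congrArg (i ∈ ·) hfilter
    simp only [Finset.mem_filter, hi, true_and, eq_iff_iff] at hiff
    rcases hval i ω with h | h <;> rcases hval i ω₀ with h' | h' <;> simp_all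
  calc μ {ω | ∑ i ∈ F, c i * β i ω = x}
      ≤ μ (⋂ i ∈ F, {ω | β i ω = β i ω₀}) := measure_mono hpattern
    _ = ∏ i ∈ F, μ {ω | β i ω = β i ω₀} :=
        hindep.meas_biInter fun i _ => ⟨{β i ω₀}, measurableSet_singleton _, rfl⟩
    _ ≤ M ^ F.card := Finset.prod_le_pow_card _ _ _ fun i _ => hM i _

lemma measure_eq_le_max_of_bernoulli [IsProbabilityMeasure μ] {b : Ω → ℝ} (hb : Measurable b)
    (hval : ∀ ω, b ω = 0 ∨ b ω = 1) {p : ℝ} (hp : 0 ≤ p)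
    (hbp : μ {ω | b ω = 1} = ENNReal.ofReal p) (x : ℝ) :
    μ {ω | b ω = x} ≤ ENNReal.ofReal (max p (1 - p)) := by
  by_cases hx1 : x = 1
  · rw [hx1, hbp]
    exact ENNReal.ofReal_le_ofReal (le_max_left _ _)
  by_cases hx0 : x = 0
  · have hcompl : {ω | b ω = 0} = {ω | b ω = 1}ᶜ := by
      ext ω
      rcases hval ω with h | h <;> simp [h]
    have hmeas1 : MeasurableSet {ω | b ω = 1} := hb (measurableSet_singleton 1)
    rw [hx0, hcompl, prob_compl_eq_one_sub hmeas1, hbp,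
      ← ENNReal.ofReal_one, ← ENNReal.ofReal_sub _ hp]
    exact ENNReal.ofReal_le_ofReal (le_max_right _ _)
  have hempty : {ω | b ω = x} = ∅ := by
    ext ω
    rcases hval ω with h | h <;> simp [h, Ne.symm hx0, Ne.symm hx1]
  simp [hempty]

end ProbabilityTheory

/-- **Non-atomicity for infinite stake sequences.** If `β i` are iid Bernoulli(p)
random variables with `0 < p < 1`, and `(c i)` is a nonnegative sequence summing to `1`
with infinitely many nonzero terms, then `S = ∑' i, c i * β i` is non-atomic:
`P(S = s) = 0` for every real `s`. -/
theorem infinite_convex_combination_nonatomic {Ω : Type*} [MeasurableSpace Ω]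
    (μ : Measure Ω) [IsProbabilityMeasure μ] (p : ℝ) (hp0 : 0 < p) (hp1 : p < 1)
    (β : ℕ → Ω → ℝ) (hmeas : ∀ i, Measurable (β i))
    (hval : ∀ i ω, β i ω = 0 ∨ β i ω = 1)
    (hβp : ∀ i, μ {ω | β i ω = 1} = ENNReal.ofReal p)
    (hindep : iIndepFun β μ)
    (c : ℕ → ℝ) (hc0 : ∀ i, 0 ≤ c i) (hc1 : (∑' i, c i) = 1)
    (hinf : {i | c i ≠ 0}.Infinite) :
    ∀ s : ℝ, μ {ω | (∑' i, c i * β i ω) = s} = 0 := by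
  intro s
  have hc : Summable c := by
    by_contra h
    simp [tsum_eq_zero_of_not_summable h] at hc1
  have hterms : ∀ ω, Summable fun i => c i * β i ω := fun ω =>
    hc.of_nonneg_of_le (fun i => by rcases hval i ω with h | h <;> simp [h, hc0 i])
      (fun i => by rcases hval i ω with h | h <;> simp [h, hc0 i])
  have hM : ENNReal.ofReal (max p (1 - p)) < 1 :=
    ENNReal.ofReal_lt_one.2 (max_lt hp1 (by linarith))
  have hatom : ∀ n : ℕ, μ {ω | ∑' i, c i * β i ω = s} ≤ ENNReal.ofReal (max p (1 - p)) ^ n := by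
    intro n
    obtain ⟨F, rfl, hF⟩ :=
      exists_finset_card_eq_injOn_sum_powerset hc.tendsto_cofinite_zero hinf n
    simp_rw [← (hterms _).sum_add_tsum_compl (s := F)]
    exact measure_add_eq_le_of_indepFun (hindep.indepFun_sum_tsum_compl hmeas c F)
      (Finset.measurable_sum _ fun i _ => (hmeas i).const_mul _)
      (Measurable.tsum fun i => (hmeas i).const_mul _)
      (measure_sum_mul_eq_le_pow hindep hval
        (fun i => measure_eq_le_max_of_bernoulli (hmeas i) (hval i) hp0.le (hβp i)) hF) s
  exact le_antisymm (ge_of_tendsto' (ENNReal.tendsto_pow_atTop_nhds_zero_of_lt_one hM) hatom)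
    bot_le
end

section
/- For 0 < p < 1, let k be the integer with 1/(k+1) < p ≤ 1/k. If S̄_k is the average of k iid Bernoulli(p) random variables, then P(S̄_k ≥ p) = 1 - (1-p)^k > 1/2. Consequently π(p,p) > 1/2. -/
open MeasureTheory ProbabilityTheory

/-!
Since `p ≤ 1/k`, the average of `k` Bernoulli variables is at least `p` exactly when one of
them equals `1`, so by independence `P(S̄_k ≥ p) = 1 - (1-p)^k`. Since `p > 1/(k+1)`,
`(1-p)^k < (k/(k+1))^k ≤ 1/2`, the last step being Bernoulli's inequality `(1 + 1/k)^k ≥ 2`.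
The uniform weights `1/k` on the first `k` indices then witness `π(p,p) > 1/2`.
-/

lemma two_le_one_add_one_div_pow {k : ℕ} (hk : 0 < k) : (2 : ℝ) ≤ (1 + 1 / k) ^ k := by
  have hk' : (k : ℝ) ≠ 0 := by positivity
  calc (2 : ℝ) = 1 + k * (1 / k) := by field_simp; norm_num
    _ ≤ (1 + 1 / k) ^ k :=
      one_add_mul_le_pow (by linarith [show (0 : ℝ) ≤ 1 / k by positivity]) k

lemma div_add_one_pow_le_half {k : ℕ} (hk : 0 < k) : ((k : ℝ) / (k + 1)) ^ k ≤ 1 / 2 := by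
  have hk' : (k : ℝ) ≠ 0 := by positivity
  have hinv : ((k : ℝ) / (k + 1)) ^ k * (1 + 1 / k) ^ k = 1 := by
    rw [← mul_pow, show (k : ℝ) / (k + 1) * (1 + 1 / k) = 1 by field_simp, one_pow]
  have hpos : (0 : ℝ) < ((k : ℝ) / (k + 1)) ^ k := by positivity
  nlinarith [two_le_one_add_one_div_pow hk]

lemma one_sub_pow_lt_half {p : ℝ} {k : ℕ} (hk : 0 < k) (hkp : 1 / (k + 1 : ℝ) < p)
    (hp1 : p ≤ 1) : (1 - p) ^ k < 1 / 2 := by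
  have hq : 1 - p < (k : ℝ) / (k + 1) := by
    have hk1 : (k : ℝ) + 1 ≠ 0 := by positivity
    have : (k : ℝ) / (k + 1) = 1 - 1 / (k + 1) := by field_simp; ring
    linarith
  calc (1 - p) ^ k < ((k : ℝ) / (k + 1)) ^ k := pow_lt_pow_left₀ hq (by linarith) hk.ne'
    _ ≤ 1 / 2 := div_add_one_pow_le_half hk

noncomputable def uniformWeights (k : ℕ) (i : ℕ) : ℝ := if i < k then 1 / k else 0

lemma uniformWeights_nonneg (k i : ℕ) : 0 ≤ uniformWeights k i := by
  unfold uniformWeights; split_ifs <;> positivity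

lemma tsum_uniformWeights_mul (k : ℕ) (x : ℕ → ℝ) :
    ∑' i, uniformWeights k i * x i = (∑ i ∈ Finset.range k, x i) / k := by
  rw [tsum_eq_sum (s := Finset.range k) fun i hi => by
      simp [uniformWeights, Finset.mem_range.not.mp hi], Finset.sum_div]
  refine Finset.sum_congr rfl fun i hi => ?_
  rw [uniformWeights, if_pos (Finset.mem_range.mp hi), one_div_mul_eq_div]

lemma tsum_uniformWeights {k : ℕ} (hk : 0 < k) : ∑' i, uniformWeights k i = 1 := by
  have hk' : (k : ℝ) ≠ 0 := by positivity
  simpa [div_self hk'] using tsum_uniformWeights_mul k fun _ => 1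

lemma setOf_le_avg_eq_compl_biInter {Ω : Type*} {β : ℕ → Ω → ℝ} {p : ℝ}
    (hval : ∀ i ω, β i ω = 0 ∨ β i ω = 1) (hp0 : 0 < p) {k : ℕ} (hpk : p ≤ 1 / (k : ℝ)) :
    {ω | p ≤ (∑ i ∈ Finset.range k, β i ω) / k} =
      (⋂ i ∈ Finset.range k, {ω | β i ω = 0})ᶜ := by
  ext ω
  simp only [Set.mem_ofPred_eq, Set.mem_compl_iff, Set.mem_iInter, not_forall]
  constructor
  · intro h
    by_contra! hall
    rw [Finset.sum_eq_zero hall, zero_div] at h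
    linarith
  · rintro ⟨j, hj, hj0⟩
    have hone : (1 : ℝ) ≤ ∑ i ∈ Finset.range k, β i ω := by
      rw [← (hval j ω).resolve_left hj0]
      exact Finset.single_le_sum (f := fun i => β i ω)
        (fun i _ => by rcases hval i ω with h | h <;> simp [h]) hj
    calc p ≤ 1 / k := hpk
      _ ≤ (∑ i ∈ Finset.range k, β i ω) / k := by gcongr

section Bernoulli

variable {Ω : Type*} [MeasurableSpace Ω] {μ : Measure Ω} {β : ℕ → Ω → ℝ} {p : ℝ}

lemma measure_setOf_eq_zero [IsProbabilityMeasure μ] {i : ℕ} (hmeas : Measurable (β i))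
    (hval : ∀ ω, β i ω = 0 ∨ β i ω = 1) (hβp : μ {ω | β i ω = 1} = ENNReal.ofReal p)
    (hp0 : 0 ≤ p) : μ {ω | β i ω = 0} = ENNReal.ofReal (1 - p) := by
  have hcompl : {ω | β i ω = 0} = {ω | β i ω = 1}ᶜ := by
    ext ω
    rcases hval ω with h | h <;> simp [h]
  have hone : MeasurableSet {ω | β i ω = 1} := hmeas (measurableSet_singleton 1)
  rw [hcompl, prob_compl_eq_one_sub hone, hβp, ← ENNReal.ofReal_one,
    ← ENNReal.ofReal_sub _ hp0]

lemma measure_biInter_setOf_eq_zero [IsProbabilityMeasure μ] (hmeas : ∀ i, Measurable (β i))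
    (hval : ∀ i ω, β i ω = 0 ∨ β i ω = 1) (hβp : ∀ i, μ {ω | β i ω = 1} = ENNReal.ofReal p)
    (hindep : iIndepFun β μ) (hp0 : 0 ≤ p) (hp1 : p ≤ 1) (k : ℕ) :
    μ (⋂ i ∈ Finset.range k, {ω | β i ω = 0}) = ENNReal.ofReal ((1 - p) ^ k) := by
  rw [hindep.meas_biInter (s := fun i => {ω | β i ω = 0})
      fun i _ => ⟨{0}, measurableSet_singleton 0, rfl⟩,
    Finset.prod_congr rfl fun i _ => measure_setOf_eq_zero (hmeas i) (hval i) (hβp i) hp0,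
    Finset.prod_const, Finset.card_range, ← ENNReal.ofReal_pow (by linarith)]

lemma toReal_measure_le_avg [IsProbabilityMeasure μ] (hmeas : ∀ i, Measurable (β i))
    (hval : ∀ i ω, β i ω = 0 ∨ β i ω = 1) (hβp : ∀ i, μ {ω | β i ω = 1} = ENNReal.ofReal p)
    (hindep : iIndepFun β μ) (hp0 : 0 < p) (hp1 : p ≤ 1) {k : ℕ} (hpk : p ≤ 1 / (k : ℝ)) :
    (μ {ω | p ≤ (∑ i ∈ Finset.range k, β i ω) / k}).toReal = 1 - (1 - p) ^ k := by
  have hinter : MeasurableSet (⋂ i ∈ Finset.range k, {ω | β i ω = 0}) :=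
    Finset.measurableSet_biInter _ fun i _ => hmeas i (measurableSet_singleton 0)
  rw [setOf_le_avg_eq_compl_biInter hval hp0 hpk, prob_compl_eq_one_sub hinter,
    measure_biInter_setOf_eq_zero hmeas hval hβp hindep hp0.le hp1,
    ENNReal.toReal_sub_of_le (by simpa using pow_le_one₀ (by linarith) (by linarith))
      ENNReal.one_ne_top, ENNReal.toReal_one,
    ENNReal.toReal_ofReal (pow_nonneg (by linarith) k)]

end Bernoulli

theorem pi_diagonal_gt_half_general {Ω : Type*} [MeasurableSpace Ω]
    (μ : Measure Ω) [IsProbabilityMeasure μ] (p : ℝ)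
    (β : ℕ → Ω → ℝ) (hmeas : ∀ i, Measurable (β i))
    (hval : ∀ i ω, β i ω = 0 ∨ β i ω = 1)
    (hβp : ∀ i, μ {ω | β i ω = 1} = ENNReal.ofReal p)
    (hindep : iIndepFun β μ)
    (k : ℕ) (hkp : 1 / (k + 1 : ℝ) < p) (hpk : p ≤ 1 / (k : ℝ)) :
    (μ {ω | p ≤ (∑ i ∈ Finset.range k, β i ω) / k}).toReal = 1 - (1 - p) ^ k ∧
    1 / 2 < 1 - (1 - p) ^ k ∧
    1 / 2 < sSup {r : ℝ | ∃ c : ℕ → ℝ, (∀ i, 0 ≤ c i) ∧ (∑' i, c i) = 1 ∧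
        r = (μ {ω | p ≤ ∑' i, c i * β i ω}).toReal} := by
  have hp0 : 0 < p := lt_trans (by positivity) hkp
  have hk : 0 < k := by
    rcases Nat.eq_zero_or_pos k with rfl | hk
    · norm_num at hpk; linarith
    · exact hk
  have hp1 : p ≤ 1 := hpk.trans (div_le_one_of_le₀ (by exact_mod_cast hk) (by positivity))
  have hprob := toReal_measure_le_avg hmeas hval hβp hindep hp0 hp1 hpk
  have hhalf : 1 / 2 < 1 - (1 - p) ^ k := by linarith [one_sub_pow_lt_half hk hkp hp1]
  refine ⟨hprob, hhalf, hhalf.trans_le (le_csSup ?_ ?_)⟩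
  · refine ⟨1, fun r ⟨c, _, _, hr⟩ => hr ▸ ENNReal.toReal_le_of_le_ofReal zero_le_one ?_⟩
    simpa using prob_le_one
  · refine ⟨uniformWeights k, uniformWeights_nonneg k, tsum_uniformWeights hk, ?_⟩
    simp_rw [tsum_uniformWeights_mul, hprob]

/-- **Lower bound on `π(p,p)` via bold play.** For `0 < p < 1`, let `k` be the integer
with `1/(k+1) < p ≤ 1/k`. The average `S̄_k` of `k` iid Bernoulli(p) random variables
satisfies `P(S̄_k ≥ p) = 1 - (1-p)^k > 1/2`; consequently `π(p,p) > 1/2`. -/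
theorem pi_diagonal_gt_half {Ω : Type*} [MeasurableSpace Ω]
    (μ : Measure Ω) [IsProbabilityMeasure μ] (p : ℝ) (hp0 : 0 < p) (hp1 : p < 1)
    (β : ℕ → Ω → ℝ) (hmeas : ∀ i, Measurable (β i))
    (hval : ∀ i ω, β i ω = 0 ∨ β i ω = 1)
    (hβp : ∀ i, μ {ω | β i ω = 1} = ENNReal.ofReal p)
    (hindep : iIndepFun β μ)
    (k : ℕ) (hk : 0 < k) (hkp : 1 / (k + 1 : ℝ) < p) (hpk : p ≤ 1 / (k : ℝ)) :
    (μ {ω | p ≤ (∑ i ∈ Finset.range k, β i ω) / k}).toReal = 1 - (1 - p) ^ k ∧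
    1 / 2 < 1 - (1 - p) ^ k ∧
    1 / 2 < sSup {r : ℝ | ∃ c : ℕ → ℝ, (∀ i, 0 ≤ c i) ∧ (∑' i, c i) = 1 ∧
        r = (μ {ω | p ≤ ∑' i, c i * β i ω}).toReal} :=
  pi_diagonal_gt_half_general μ p β hmeas hval hβp hindep k hkp hpk
end

section
/- For every p with 0 < p < 1, π(p,p) ≤ 1 - (2√3 - 3)/max(3, 1/(p(1-p)) - 3); in particular π(p,p) < 1. -/
/-!
Write `X = ∑ cᵢ (βᵢ - p)`, so that `p ≤ ∑ cᵢ βᵢ` is the event `X ≥ 0`, and `X` has mean zero.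
A centered Bernoulli variable has `E Y⁴ / (E Y²)² = 1/(p(1-p)) - 3`, and adding independent
mean-zero variables does not push this ratio above any `M ≥ 3`, since
`E (Y + Z)⁴ = E Y⁴ + 6 E Y² E Z² + E Z⁴`. Hence `E X⁴ ≤ M (E X²)²` with
`M = max 3 (1/(p(1-p)) - 3)`, and the Paley–Zygmund type inequality
`P(X < 0) ≥ (2√3 - 3) (E X²)² / E X⁴`, obtained by integrating a quartic minorant of the
indicator of `(-∞, 0)`, gives `P(X < 0) ≥ (2√3 - 3) / M`.
-/

open MeasureTheory ProbabilityTheory Real Finset Filter Topology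
open scoped ENNReal

section

variable {Ω : Type*} [MeasurableSpace Ω] {μ : Measure Ω}

lemma MeasureTheory.MemLp.integrable_pow_of_le [IsFiniteMeasure μ] {X : Ω → ℝ} {p : ℝ≥0∞}
    {k : ℕ} (hX : MemLp X p μ) (hk : k ≤ p) : Integrable (fun ω => X ω ^ k) μ := by
  refine (integrable_norm_iff (hX.aestronglyMeasurable.pow k)).mp ?_
  simpa [norm_pow] using (hX.mono_exponent hk).integrable_norm_pow'

lemma memLp_of_abs_le [IsFiniteMeasure μ] {X : Ω → ℝ} (hX : Measurable X) {C : ℝ}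
    (hC : ∀ ω, |X ω| ≤ C) {p : ℝ≥0∞} : MemLp X p μ :=
  MemLp.of_bound hX.aestronglyMeasurable C (ae_of_all _ hC)

lemma integral_finsetSum_eq_zero {ι : Type*} {Z : ι → Ω → ℝ} (s : Finset ι)
    (hZ : ∀ i, Integrable (Z i) μ) (hZ0 : ∀ i, μ[Z i] = 0) : ∫ ω, ∑ i ∈ s, Z i ω ∂μ = 0 := by
  rw [integral_finsetSum s fun i _ => hZ i]
  exact sum_eq_zero fun i _ => hZ0 i

-- The quartic touches `0` doubly at `√3 - 1` and the constant `6√3 - 9` doubly at `-1`; the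
-- ratio `(12 - 6√3)² / (4 (6√3 - 9)) = 2√3 - 3` is the constant of the Paley–Zygmund bound.
lemma quartic_le_indicator_Iio (x : ℝ) :
    (12 - 6 * √3) * x ^ 2 - x ^ 4 - (12 * √3 - 20) * x ≤
      (6 * √3 - 9) * (Set.Iio 0).indicator 1 x := by
  have h3 : √3 ^ 2 = 3 := sq_sqrt (by norm_num)
  have h3lt : 3 / 2 < √3 := by nlinarith [sqrt_nonneg 3]
  rcases lt_or_ge x 0 with hx | hx
  · rw [Set.indicator_of_mem (Set.mem_Iio.mpr hx), Pi.one_apply, mul_one]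
    have hq : 0 < x ^ 2 - 2 * x + (6 * √3 - 9) := by nlinarith
    linear_combination mul_nonneg (sq_nonneg (x + 1)) hq.le
  · rw [Set.indicator_of_notMem (by simpa using hx), mul_zero]
    have hx0 : 0 ≤ x + 2 * (√3 - 1) := by linarith
    linear_combination mul_nonneg hx (mul_nonneg (sq_nonneg (x - (√3 - 1))) hx0) +
      (-3 * x ^ 2 - (6 - 2 * √3) * x) * h3

section PaleyZygmund

variable [IsProbabilityMeasure μ] {X : Ω → ℝ}

lemma sq_integral_sq_le_integral_pow_four (hX : MemLp X 4 μ) :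
    (∫ ω, X ω ^ 2 ∂μ) ^ 2 ≤ ∫ ω, X ω ^ 4 ∂μ := by
  have hX2 : MemLp (fun ω => X ω ^ 2) 2 μ := by
    refine (memLp_two_iff_integrable_sq (hX.aestronglyMeasurable.pow 2)).mpr ?_
    simpa [← pow_mul] using hX.integrable_pow_of_le (k := 4) le_rfl
  have := variance_nonneg (fun ω => X ω ^ 2) μ
  rw [variance_eq_sub hX2] at this
  simp only [Pi.pow_apply, ← pow_mul] at this
  linarith

lemma integral_quartic_le_measureReal_neg (hXm : Measurable X) (hX : MemLp X 4 μ)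
    (hX0 : μ[X] = 0) {s : ℝ} (hs : 0 < s) :
    (12 - 6 * √3) * s ^ 2 * ∫ ω, X ω ^ 2 ∂μ - s ^ 4 * ∫ ω, X ω ^ 4 ∂μ ≤
      (6 * √3 - 9) * μ.real {ω | X ω < 0} := by
  have hneg : MeasurableSet {ω | X ω < 0} := measurableSet_lt hXm measurable_const
  have hpt : ∀ ω, (12 - 6 * √3) * s ^ 2 * X ω ^ 2 - s ^ 4 * X ω ^ 4 - (12 * √3 - 20) * s * X ω ≤
      (6 * √3 - 9) * {ω | X ω < 0}.indicator 1 ω := by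
    intro ω
    have hmem : s * X ω ∈ Set.Iio 0 ↔ ω ∈ {ω | X ω < 0} := by
      simp [mul_neg_iff, hs, hs.not_gt]
    have := quartic_le_indicator_Iio (s * X ω)
    simp only [Set.indicator_apply, hmem] at this ⊢
    linear_combination this
  have i1 : Integrable X μ := hX.integrable (by norm_num)
  have i2 := hX.integrable_pow_of_le (k := 2) (by norm_num)
  have i4 := hX.integrable_pow_of_le (k := 4) le_rfl
  have hquart : Integrable (fun ω => (12 - 6 * √3) * s ^ 2 * X ω ^ 2 - s ^ 4 * X ω ^ 4) μ :=
    (i2.const_mul _).sub (i4.const_mul _)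
  calc (12 - 6 * √3) * s ^ 2 * ∫ ω, X ω ^ 2 ∂μ - s ^ 4 * ∫ ω, X ω ^ 4 ∂μ
      = ∫ ω, (12 - 6 * √3) * s ^ 2 * X ω ^ 2 - s ^ 4 * X ω ^ 4 - (12 * √3 - 20) * s * X ω ∂μ := by
        rw [integral_sub hquart (i1.const_mul _), integral_sub (i2.const_mul _) (i4.const_mul _),
          integral_const_mul, integral_const_mul, integral_const_mul, hX0, mul_zero, sub_zero]
    _ ≤ ∫ ω, (6 * √3 - 9) * {ω | X ω < 0}.indicator 1 ω ∂μ :=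
        integral_mono (hquart.sub (i1.const_mul _))
          (((integrable_const 1).indicator hneg).const_mul _) hpt
    _ = (6 * √3 - 9) * μ.real {ω | X ω < 0} := by
        rw [integral_const_mul, integral_indicator_one hneg]

theorem paley_zygmund_neg (hXm : Measurable X) (hX : MemLp X 4 μ) (hX0 : μ[X] = 0) :
    (2 * √3 - 3) * (∫ ω, X ω ^ 2 ∂μ) ^ 2 ≤ (∫ ω, X ω ^ 4 ∂μ) * μ.real {ω | X ω < 0} := by
  set σ := ∫ ω, X ω ^ 2 ∂μ
  set m := ∫ ω, X ω ^ 4 ∂μ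
  have hσm : σ ^ 2 ≤ m := sq_integral_sq_le_integral_pow_four hX
  have hσ : 0 ≤ σ := integral_nonneg fun ω => sq_nonneg _
  rcases hσ.eq_or_lt with hσ0 | hσ0
  · rw [← hσ0]
    simpa using mul_nonneg ((sq_nonneg σ).trans hσm) measureReal_nonneg
  have hm : 0 < m := (pow_pos hσ0 2).trans_le hσm
  have h3 : √3 ^ 2 = 3 := sq_sqrt (by norm_num)
  have ha : 0 < 12 - 6 * √3 := by nlinarith [sqrt_nonneg 3]
  have hk : 0 < 6 * √3 - 9 := by nlinarith [sqrt_nonneg 3]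
  -- `s² = a σ / (2 m)` maximises `a s² σ - s⁴ m`, with `a = 12 - 6√3`
  have hs2 : √((12 - 6 * √3) * σ / (2 * m)) ^ 2 = (12 - 6 * √3) * σ / (2 * m) :=
    sq_sqrt (by positivity)
  have h := integral_quartic_le_measureReal_neg hXm hX hX0
    (sqrt_pos.mpr (by positivity) : 0 < √((12 - 6 * √3) * σ / (2 * m)))
  rw [show ∀ t : ℝ, t ^ 4 = (t ^ 2) ^ 2 from fun t => by ring, hs2] at h
  have hopt : (12 - 6 * √3) * ((12 - 6 * √3) * σ / (2 * m)) * σ -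
      ((12 - 6 * √3) * σ / (2 * m)) ^ 2 * m = (6 * √3 - 9) * (2 * √3 - 3) * σ ^ 2 / m := by
    field_simp
    linear_combination (-12) * h3
  rw [hopt, div_le_iff₀ hm] at h
  nlinarith

lemma div_le_measureReal_neg_of_integral_pow_four_le (hXm : Measurable X) (hX : MemLp X 4 μ)
    (hX0 : μ[X] = 0) (hσ : 0 < ∫ ω, X ω ^ 2 ∂μ) {M : ℝ} (hM : 0 < M)
    (hXM : ∫ ω, X ω ^ 4 ∂μ ≤ M * (∫ ω, X ω ^ 2 ∂μ) ^ 2) :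
    (2 * √3 - 3) / M ≤ μ.real {ω | X ω < 0} := by
  have hPZ := paley_zygmund_neg hXm hX hX0
  have hP : 0 ≤ μ.real {ω | X ω < 0} := measureReal_nonneg
  rw [div_le_iff₀ hM]
  nlinarith [mul_le_mul_of_nonneg_right hXM hP, pow_pos hσ 2]

end PaleyZygmund

section IndepSum

variable {Y Z : Ω → ℝ}

lemma ProbabilityTheory.IndepFun.integral_add_pow [IsFiniteMeasure μ] {n : ℕ}
    (hYZ : IndepFun Y Z μ) (hY : MemLp Y n μ) (hZ : MemLp Z n μ) :
    ∫ ω, (Y ω + Z ω) ^ n ∂μ =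
      ∑ k ∈ range (n + 1), (∫ ω, Y ω ^ k ∂μ) * (∫ ω, Z ω ^ (n - k) ∂μ) * n.choose k := by
  have hprod : ∀ k ∈ range (n + 1), IndepFun (fun ω => Y ω ^ k) (fun ω => Z ω ^ (n - k)) μ :=
    fun k _ => hYZ.comp (measurable_id.pow_const k) (measurable_id.pow_const (n - k))
  have hYk : ∀ k ∈ range (n + 1), Integrable (fun ω => Y ω ^ k) μ := fun k hk =>
    hY.integrable_pow_of_le (by exact_mod_cast Nat.lt_succ_iff.mp (mem_range.mp hk))
  have hZk : ∀ k, Integrable (fun ω => Z ω ^ (n - k)) μ := fun k =>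
    hZ.integrable_pow_of_le (by exact_mod_cast Nat.sub_le n k)
  simp_rw [add_pow]
  rw [integral_finsetSum _ fun k hk => by
    exact ((hprod k hk).integrable_mul (hYk k hk) (hZk k)).mul_const _]
  refine sum_congr rfl fun k hk => ?_
  rw [integral_mul_const, (hprod k hk).integral_fun_mul_eq_mul_integral
    (hYk k hk).aestronglyMeasurable (hZk k).aestronglyMeasurable]

variable [IsProbabilityMeasure μ]

lemma ProbabilityTheory.IndepFun.integral_add_sq (hYZ : IndepFun Y Z μ)
    (hY : MemLp Y 2 μ) (hZ : MemLp Z 2 μ) (hY0 : μ[Y] = 0) :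
    ∫ ω, (Y ω + Z ω) ^ 2 ∂μ = ∫ ω, Y ω ^ 2 ∂μ + ∫ ω, Z ω ^ 2 ∂μ := by
  rw [hYZ.integral_add_pow (n := 2) hY hZ]
  simp [sum_range_succ, hY0]
  ring

lemma ProbabilityTheory.IndepFun.integral_add_pow_four (hYZ : IndepFun Y Z μ)
    (hY : MemLp Y 4 μ) (hZ : MemLp Z 4 μ) (hY0 : μ[Y] = 0) (hZ0 : μ[Z] = 0) :
    ∫ ω, (Y ω + Z ω) ^ 4 ∂μ =
      ∫ ω, Y ω ^ 4 ∂μ + 6 * (∫ ω, Y ω ^ 2 ∂μ) * (∫ ω, Z ω ^ 2 ∂μ) + ∫ ω, Z ω ^ 4 ∂μ := by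
  rw [hYZ.integral_add_pow (n := 4) hY hZ]
  simp [sum_range_succ, hY0, hZ0, Nat.choose]
  ring

lemma ProbabilityTheory.IndepFun.integral_add_pow_four_le (hYZ : IndepFun Y Z μ)
    (hY : MemLp Y 4 μ) (hZ : MemLp Z 4 μ) (hY0 : μ[Y] = 0) (hZ0 : μ[Z] = 0) {M : ℝ} (hM : 3 ≤ M)
    (hYM : ∫ ω, Y ω ^ 4 ∂μ ≤ M * (∫ ω, Y ω ^ 2 ∂μ) ^ 2)
    (hZM : ∫ ω, Z ω ^ 4 ∂μ ≤ M * (∫ ω, Z ω ^ 2 ∂μ) ^ 2) :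
    ∫ ω, (Y ω + Z ω) ^ 4 ∂μ ≤ M * (∫ ω, (Y ω + Z ω) ^ 2 ∂μ) ^ 2 := by
  rw [hYZ.integral_add_pow_four hY hZ hY0 hZ0,
    hYZ.integral_add_sq (hY.mono_exponent (by norm_num)) (hZ.mono_exponent (by norm_num)) hY0]
  have hY2 : 0 ≤ ∫ ω, Y ω ^ 2 ∂μ := integral_nonneg fun ω => sq_nonneg _
  have hZ2 : 0 ≤ ∫ ω, Z ω ^ 2 ∂μ := integral_nonneg fun ω => sq_nonneg _
  nlinarith [mul_nonneg hY2 hZ2]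

end IndepSum

section Series

variable {Z : ℕ → Ω → ℝ}

lemma tendsto_integral_pow_sum_range [IsFiniteMeasure μ] (hmeas : ∀ i, Measurable (Z i))
    {c : ℕ → ℝ} (hc : Summable c) (hbound : ∀ i ω, |Z i ω| ≤ c i) (k : ℕ) :
    Tendsto (fun n => ∫ ω, (∑ i ∈ range n, Z i ω) ^ k ∂μ) atTop
      (𝓝 (∫ ω, (∑' i, Z i ω) ^ k ∂μ)) := by
  have hpart : ∀ n ω, |∑ i ∈ range n, Z i ω| ≤ ∑' i, |c i| := fun n ω =>
    calc |∑ i ∈ range n, Z i ω| ≤ ∑ i ∈ range n, |c i| :=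
          (abs_sum_le_sum_abs _ _).trans (sum_le_sum fun i _ => (hbound i ω).trans (le_abs_self _))
      _ ≤ ∑' i, |c i| := hc.abs.sum_le_tsum _ fun i _ => abs_nonneg _
  refine tendsto_integral_of_dominated_convergence (fun _ => (∑' i, |c i|) ^ k)
    (fun n => ((Finset.measurable_sum _ fun i _ => hmeas i).pow_const k).aestronglyMeasurable)
    (integrable_const _) (fun n => ae_of_all _ fun ω => ?_) (ae_of_all _ fun ω => ?_)
  · rw [norm_pow, Real.norm_eq_abs]
    exact pow_le_pow_left₀ (abs_nonneg _) (hpart n ω) k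
  · exact ((Summable.of_norm_bounded hc fun i => hbound i ω).hasSum.tendsto_sum_nat).pow k

lemma integral_tsum_eq_zero [IsFiniteMeasure μ] (hmeas : ∀ i, Measurable (Z i)) {c : ℕ → ℝ}
    (hc : Summable c) (hbound : ∀ i ω, |Z i ω| ≤ c i) (hZ0 : ∀ i, μ[Z i] = 0) :
    ∫ ω, ∑' i, Z i ω ∂μ = 0 := by
  have h := tendsto_integral_pow_sum_range (μ := μ) hmeas hc hbound 1
  simp only [pow_one, integral_finsetSum_eq_zero _
    (fun i => (memLp_of_abs_le (hmeas i) (hbound i) (p := 1)).integrable le_rfl) hZ0] at h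
  exact tendsto_nhds_unique h tendsto_const_nhds

namespace ProbabilityTheory.iIndepFun

lemma indepFun_sum_range (hind : iIndepFun Z μ) (hmeas : ∀ i, Measurable (Z i)) (n : ℕ) :
    IndepFun (fun ω => ∑ i ∈ range n, Z i ω) (Z n) μ := by
  simpa only [← Finset.sum_apply] using hind.indepFun_sum_range_succ hmeas n

variable [IsProbabilityMeasure μ]

lemma integral_sum_range_sq (hind : iIndepFun Z μ) (hmeas : ∀ i, Measurable (Z i))
    (hZ : ∀ i, MemLp (Z i) 2 μ) (hZ0 : ∀ i, μ[Z i] = 0) (n : ℕ) :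
    ∫ ω, (∑ i ∈ range n, Z i ω) ^ 2 ∂μ = ∑ i ∈ range n, ∫ ω, Z i ω ^ 2 ∂μ := by
  induction n with
  | zero => simp
  | succ n ih =>
    simp only [sum_range_succ]
    rw [(hind.indepFun_sum_range hmeas n).integral_add_sq (memLp_finsetSum _ fun i _ => hZ i)
      (hZ n) (integral_finsetSum_eq_zero _ (fun i => (hZ i).integrable (by norm_num)) hZ0), ih]

lemma integral_sum_range_pow_four_le (hind : iIndepFun Z μ) (hmeas : ∀ i, Measurable (Z i))
    (hZ : ∀ i, MemLp (Z i) 4 μ) (hZ0 : ∀ i, μ[Z i] = 0) {M : ℝ} (hM : 3 ≤ M)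
    (hZM : ∀ i, ∫ ω, Z i ω ^ 4 ∂μ ≤ M * (∫ ω, Z i ω ^ 2 ∂μ) ^ 2) (n : ℕ) :
    ∫ ω, (∑ i ∈ range n, Z i ω) ^ 4 ∂μ ≤ M * (∫ ω, (∑ i ∈ range n, Z i ω) ^ 2 ∂μ) ^ 2 := by
  induction n with
  | zero => simp
  | succ n ih =>
    simp only [sum_range_succ]
    exact (hind.indepFun_sum_range hmeas n).integral_add_pow_four_le
      (memLp_finsetSum _ fun i _ => hZ i) (hZ n)
      (integral_finsetSum_eq_zero _ (fun i => (hZ i).integrable (by norm_num)) hZ0) (hZ0 n) hM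
      ih (hZM n)

lemma hasSum_integral_sq (hind : iIndepFun Z μ) (hmeas : ∀ i, Measurable (Z i)) {c : ℕ → ℝ}
    (hc : Summable c) (hbound : ∀ i ω, |Z i ω| ≤ c i) (hZ0 : ∀ i, μ[Z i] = 0) :
    HasSum (fun i => ∫ ω, Z i ω ^ 2 ∂μ) (∫ ω, (∑' i, Z i ω) ^ 2 ∂μ) := by
  refine (hasSum_iff_tendsto_nat_of_nonneg (fun i => integral_nonneg fun ω => sq_nonneg _) _).mpr ?_
  simpa only [hind.integral_sum_range_sq hmeas (fun i => memLp_of_abs_le (hmeas i) (hbound i))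
    hZ0] using tendsto_integral_pow_sum_range (μ := μ) hmeas hc hbound 2

lemma integral_tsum_pow_four_le (hind : iIndepFun Z μ) (hmeas : ∀ i, Measurable (Z i))
    {c : ℕ → ℝ} (hc : Summable c) (hbound : ∀ i ω, |Z i ω| ≤ c i) (hZ0 : ∀ i, μ[Z i] = 0)
    {M : ℝ} (hM : 3 ≤ M) (hZM : ∀ i, ∫ ω, Z i ω ^ 4 ∂μ ≤ M * (∫ ω, Z i ω ^ 2 ∂μ) ^ 2) :
    ∫ ω, (∑' i, Z i ω) ^ 4 ∂μ ≤ M * (∫ ω, (∑' i, Z i ω) ^ 2 ∂μ) ^ 2 :=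
  le_of_tendsto_of_tendsto' (tendsto_integral_pow_sum_range hmeas hc hbound 4)
    (((tendsto_integral_pow_sum_range hmeas hc hbound 2).pow 2).const_mul M)
    (hind.integral_sum_range_pow_four_le hmeas (fun i => memLp_of_abs_le (hmeas i) (hbound i))
      hZ0 hM hZM)

end ProbabilityTheory.iIndepFun

end Series

section Bernoulli

variable [IsProbabilityMeasure μ] {β : Ω → ℝ} {p : ℝ}

lemma integral_bernoulli_sub_pow (hmeas : Measurable β) (hval : ∀ ω, β ω = 0 ∨ β ω = 1)
    (hβp : μ {ω | β ω = 1} = ENNReal.ofReal p) (hp : 0 ≤ p) (k : ℕ) :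
    ∫ ω, (β ω - p) ^ k ∂μ = (1 - p) * (-p) ^ k + p * (1 - p) ^ k := by
  have hset : MeasurableSet {ω | β ω = 1} := hmeas (measurableSet_singleton 1)
  have hβ : ∀ ω, {ω | β ω = 1}.indicator 1 ω = β ω := fun ω => by
    rcases hval ω with h | h <;> simp [h]
  have hint : Integrable β μ := ((integrable_const 1).indicator hset).congr (ae_of_all _ hβ)
  have hmean : ∫ ω, β ω ∂μ = p := by
    rw [← integral_congr_ae (ae_of_all _ hβ), integral_indicator_one hset, measureReal_def, hβp,
      ENNReal.toReal_ofReal hp]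
  have hpt : ∀ ω, (β ω - p) ^ k = (-p) ^ k + ((1 - p) ^ k - (-p) ^ k) * β ω := fun ω => by
    rcases hval ω with h | h <;> simp [h]
  simp_rw [hpt]
  rw [integral_add (integrable_const _) (hint.const_mul _), integral_const_mul, integral_const,
    hmean]
  simp
  ring

lemma integral_mul_bernoulli_sub (hmeas : Measurable β) (hval : ∀ ω, β ω = 0 ∨ β ω = 1)
    (hβp : μ {ω | β ω = 1} = ENNReal.ofReal p) (hp : 0 ≤ p) (a : ℝ) :
    ∫ ω, a * (β ω - p) ∂μ = 0 := by
  have h := integral_bernoulli_sub_pow hmeas hval hβp hp 1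
  simp only [pow_one] at h
  rw [integral_const_mul, h]
  ring

lemma integral_mul_bernoulli_sub_sq (hmeas : Measurable β) (hval : ∀ ω, β ω = 0 ∨ β ω = 1)
    (hβp : μ {ω | β ω = 1} = ENNReal.ofReal p) (hp : 0 ≤ p) (a : ℝ) :
    ∫ ω, (a * (β ω - p)) ^ 2 ∂μ = a ^ 2 * (p * (1 - p)) := by
  simp_rw [mul_pow]
  rw [integral_const_mul, integral_bernoulli_sub_pow hmeas hval hβp hp]
  ring

lemma integral_mul_bernoulli_sub_pow_four_le (hmeas : Measurable β)
    (hval : ∀ ω, β ω = 0 ∨ β ω = 1) (hβp : μ {ω | β ω = 1} = ENNReal.ofReal p) (hp0 : 0 < p)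
    (hp1 : p < 1) {M : ℝ} (hM : 1 / (p * (1 - p)) - 3 ≤ M) (a : ℝ) :
    ∫ ω, (a * (β ω - p)) ^ 4 ∂μ ≤ M * (∫ ω, (a * (β ω - p)) ^ 2 ∂μ) ^ 2 := by
  have hq : 0 < p * (1 - p) := mul_pos hp0 (sub_pos.mpr hp1)
  have hqM : p * (1 - p) * (1 - 3 * (p * (1 - p))) ≤ M * (p * (1 - p)) ^ 2 := by
    have h := mul_le_mul_of_nonneg_right hM (sq_nonneg (p * (1 - p)))
    rwa [sub_mul, one_div, sq, inv_mul_cancel_left₀ hq.ne', ← sq,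
      show p * (1 - p) - 3 * (p * (1 - p)) ^ 2 = p * (1 - p) * (1 - 3 * (p * (1 - p))) by ring]
      at h
  calc ∫ ω, (a * (β ω - p)) ^ 4 ∂μ = a ^ 4 * (p * (1 - p) * (1 - 3 * (p * (1 - p)))) := by
        simp_rw [mul_pow]
        rw [integral_const_mul, integral_bernoulli_sub_pow hmeas hval hβp hp0.le]
        ring
    _ ≤ a ^ 4 * (M * (p * (1 - p)) ^ 2) := by gcongr
    _ = M * (∫ ω, (a * (β ω - p)) ^ 2 ∂μ) ^ 2 := by
        rw [integral_mul_bernoulli_sub_sq hmeas hval hβp hp0.le]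
        ring

end Bernoulli

variable [IsProbabilityMeasure μ] {p : ℝ} {β : ℕ → Ω → ℝ} {M : ℝ} {c : ℕ → ℝ}

theorem div_le_measureReal_tsum_mul_sub_neg (hp0 : 0 < p) (hp1 : p < 1)
    (hmeas : ∀ i, Measurable (β i)) (hval : ∀ i ω, β i ω = 0 ∨ β i ω = 1)
    (hβp : ∀ i, μ {ω | β i ω = 1} = ENNReal.ofReal p) (hindep : iIndepFun β μ)
    (hM3 : 3 ≤ M) (hM : 1 / (p * (1 - p)) - 3 ≤ M)
    (hc0 : ∀ i, 0 ≤ c i) (hc : Summable c) (hc_ne : c ≠ 0) :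
    (2 * √3 - 3) / M ≤ μ.real {ω | ∑' i, c i * (β i ω - p) < 0} := by
  set Z : ℕ → Ω → ℝ := fun i ω => c i * (β i ω - p)
  have hZind : iIndepFun Z μ :=
    hindep.comp (fun i x => c i * (x - p)) fun i => (measurable_id.sub_const p).const_mul (c i)
  have hZmeas : ∀ i, Measurable (Z i) := fun i => ((hmeas i).sub_const p).const_mul (c i)
  have hbound : ∀ i ω, |Z i ω| ≤ c i := fun i ω => by
    have : |β i ω - p| ≤ 1 := by
      rw [abs_le]; rcases hval i ω with h | h <;> rw [h] <;> constructor <;> linarith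
    simpa [Z, abs_mul, abs_of_nonneg (hc0 i)] using mul_le_of_le_one_right (hc0 i) this
  have hZ0 : ∀ i, μ[Z i] = 0 := fun i =>
    integral_mul_bernoulli_sub (hmeas i) (hval i) (hβp i) hp0.le (c i)
  have hXm : Measurable fun ω => ∑' i, Z i ω := Measurable.tsum hZmeas
  have hXbound : ∀ ω, |∑' i, Z i ω| ≤ ∑' i, c i := fun ω =>
    tsum_of_norm_bounded (f := fun i => Z i ω) hc.hasSum fun i => hbound i ω
  have hσ : 0 < ∫ ω, (∑' i, Z i ω) ^ 2 ∂μ := by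
    obtain ⟨i, hi⟩ := Function.ne_iff.mp hc_ne
    have hsum := hZind.hasSum_integral_sq hZmeas hc hbound hZ0
    simp only [Z, integral_mul_bernoulli_sub_sq (hmeas _) (hval _) (hβp _) hp0.le] at hsum
    rw [← hsum.tsum_eq]
    exact hsum.summable.tsum_pos (fun j => by positivity) i
      (mul_pos (pow_pos ((hc0 i).lt_of_ne' hi) 2) (mul_pos hp0 (sub_pos.mpr hp1)))
  exact div_le_measureReal_neg_of_integral_pow_four_le hXm
    (memLp_of_abs_le hXm hXbound)
    (integral_tsum_eq_zero hZmeas hc hbound hZ0) hσ (by linarith)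
    (hZind.integral_tsum_pow_four_le hZmeas hc hbound hZ0 hM3 fun i =>
      integral_mul_bernoulli_sub_pow_four_le (hmeas i) (hval i) (hβp i) hp0 hp1 hM (c i))

theorem measureReal_le_tsum_mul_le (hp0 : 0 < p) (hp1 : p < 1)
    (hmeas : ∀ i, Measurable (β i)) (hval : ∀ i ω, β i ω = 0 ∨ β i ω = 1)
    (hβp : ∀ i, μ {ω | β i ω = 1} = ENNReal.ofReal p) (hindep : iIndepFun β μ)
    (hM3 : 3 ≤ M) (hM : 1 / (p * (1 - p)) - 3 ≤ M) (hc0 : ∀ i, 0 ≤ c i)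
    (hcsum : ∑' i, c i = 1) :
    μ.real {ω | p ≤ ∑' i, c i * β i ω} ≤ 1 - (2 * √3 - 3) / M := by
  have hc : Summable c := by
    by_contra h
    simp [tsum_eq_zero_of_not_summable h] at hcsum
  have hc_ne : c ≠ 0 := by
    rintro rfl
    simp at hcsum
  have hcentered : ∀ ω, ∑' i, c i * (β i ω - p) = ∑' i, c i * β i ω - p := fun ω => by
    have hcβ : Summable fun i => c i * β i ω :=
      Summable.of_norm_bounded hc fun i => by
        rcases hval i ω with h | h <;> simp [h, abs_of_nonneg (hc0 i), hc0 i]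
    simp only [mul_sub]
    rw [hcβ.tsum_sub (hc.mul_right p), tsum_mul_right, hcsum, one_mul]
  have hevent : {ω | p ≤ ∑' i, c i * β i ω} = {ω | ∑' i, c i * (β i ω - p) < 0}ᶜ := by
    ext ω
    simp [hcentered]
  rw [hevent, probReal_compl_eq_one_sub (measurableSet_lt
    (Measurable.tsum fun i => ((hmeas i).sub_const p).const_mul (c i)) measurable_const)]
  linarith [div_le_measureReal_tsum_mul_sub_neg hp0 hp1 hmeas hval hβp hindep hM3 hM hc0 hc hc_ne]

end

/-- **Upper bound on `π(p,p)` via a Paley–Zygmund type inequality.** For `0 < p < 1`,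
`π(p,p) ≤ 1 - (2√3 - 3) / max 3 (1/(p(1-p)) - 3)`; in particular `π(p,p) < 1`. -/
theorem pi_diagonal_lt_one {Ω : Type*} [MeasurableSpace Ω]
    (μ : Measure Ω) [IsProbabilityMeasure μ] (p : ℝ) (hp0 : 0 < p) (hp1 : p < 1)
    (β : ℕ → Ω → ℝ) (hmeas : ∀ i, Measurable (β i))
    (hval : ∀ i ω, β i ω = 0 ∨ β i ω = 1)
    (hβp : ∀ i, μ {ω | β i ω = 1} = ENNReal.ofReal p)
    (hindep : iIndepFun β μ) :
    sSup {r : ℝ | ∃ c : ℕ → ℝ, (∀ i, 0 ≤ c i) ∧ (∑' i, c i) = 1 ∧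
        r = (μ {ω | p ≤ ∑' i, c i * β i ω}).toReal} ≤
      1 - (2 * Real.sqrt 3 - 3) / max 3 (1 / (p * (1 - p)) - 3) ∧
    sSup {r : ℝ | ∃ c : ℕ → ℝ, (∀ i, 0 ≤ c i) ∧ (∑' i, c i) = 1 ∧
        r = (μ {ω | p ≤ ∑' i, c i * β i ω}).toReal} < 1 := by
  set M := max 3 (1 / (p * (1 - p)) - 3)
  have hM3 : 3 ≤ M := le_max_left _ _
  have hκ : 0 < 2 * √3 - 3 ∧ 2 * √3 - 3 < 3 := by
    constructor <;> nlinarith [sq_sqrt (show (0 : ℝ) ≤ 3 by norm_num), sqrt_nonneg 3]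
  have hδ : 0 < (2 * √3 - 3) / M := div_pos hκ.1 (by linarith)
  have hδ1 : (2 * √3 - 3) / M < 1 := (div_lt_one (by linarith)).mpr (by linarith)
  have hle : sSup {r : ℝ | ∃ c : ℕ → ℝ, (∀ i, 0 ≤ c i) ∧ (∑' i, c i) = 1 ∧
      r = (μ {ω | p ≤ ∑' i, c i * β i ω}).toReal} ≤ 1 - (2 * √3 - 3) / M := by
    refine Real.sSup_le ?_ (by linarith)
    rintro r ⟨c, hc0, hcsum, rfl⟩
    exact measureReal_le_tsum_mul_le hp0 hp1 hmeas hval hβp hindep hM3 (le_max_right _ _) hc0 hcsum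
  exact ⟨hle, hle.trans_lt (by linarith)⟩
end

section
/- If k/(k+1) < p ≤ (k+1)/(k+2) < t for some positive integer k, then for every nonnegative sequence (c_i) summing to 1, P(Σ c_i β_i ≥ t) ≤ p, with equality for c_1 = 1. That is, bold play (staking everything on one bet) is optimal. -/
/-!
Truncating the stakes reduces the claim to finitely many bets, where the probability of
reaching `t` is a polynomial in `p`; by continuity it suffices to treat rational
`p = (b - a) / b`. Such a bet is modelled by a uniform point on `ZMod b` that wins iff it
avoids the arc `[θ, θ + a)`, for any fixed rotation `θ`. Averaging over `θ`, it suffices that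
for every configuration of points at least `a` rotations lose, i.e. put mass more than
`∑ c - t` on their arc. As `(k + 1) a < b ≤ (k + 2) a`, the arcs at `θ, θ + a, …, θ + k a`
and one shorter arc partition the circle, and since the total stake exceeds `k + 2` times
`∑ c - t`, one of them is heavy; a covering argument turns this into `a` heavy rotations.
-/

open Finset MeasureTheory ProbabilityTheory

namespace ZMod

variable {b : ℕ} [NeZero b]

theorem val_sub_natCast_lt_iff (y : ZMod b) {m l : ℕ} (h : m + l ≤ b) :
    (y - m).val < l ↔ m ≤ y.val ∧ y.val < m + l := by
  rcases Nat.eq_zero_or_pos l with rfl | hl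
  · omega
  have hy : y.val = ((y - m).val + m) % b := by
    conv_lhs => rw [← sub_add_cancel y (m : ZMod b)]
    rw [val_add, val_natCast_of_lt (by omega)]
  have hlt := val_lt (y - (m : ZMod b))
  rcases lt_or_ge ((y - m).val + m) b with hsmall | hbig
  · rw [Nat.mod_eq_of_lt hsmall] at hy
    omega
  · rw [Nat.mod_eq_sub_mod hbig, Nat.mod_eq_of_lt (by omega)] at hy
    omega

theorem card_filter_le_val (a : ℕ) : #{x : ZMod b | a ≤ x.val} = b - a := by
  rw [← Nat.card_Ico, card_nbij' val ((↑) : ℕ → ZMod b)]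
  · intro x hx
    simpa [val_lt x] using hx
  · intro m hm
    simp only [coe_Ico, Set.mem_Ico] at hm
    simpa [val_natCast_of_lt hm.2] using hm.1
  · intro x _
    simp
  · intro m hm
    simp only [coe_Ico, Set.mem_Ico] at hm
    exact val_natCast_of_lt hm.2

theorem eq_univ_of_forall_sub_one_mem {S : Finset (ZMod b)} (hS : S.Nonempty)
    (h : ∀ x ∈ S, x - 1 ∈ S) : S = univ := by
  obtain ⟨x₀, hx₀⟩ := hS
  have hsub : ∀ n : ℕ, x₀ - n ∈ S := by
    intro n
    induction n with
    | zero => simpa using hx₀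
    | succ n ih => simpa [sub_sub] using h _ ih
  refine eq_univ_of_forall fun y => ?_
  simpa using hsub (x₀ - y).val

theorem min_le_card_filter_exists_add_mem {S : Finset (ZMod b)} (hS : S.Nonempty) (d : ℕ) :
    min b (#S + d) ≤ #{x | ∃ j ≤ d, x + (j : ZMod b) ∈ S} := by
  induction d with
  | zero =>
    refine (min_le_right _ _).trans (card_le_card fun x hx => ?_)
    simpa using hx
  | succ d ih =>
    set T : ℕ → Finset (ZMod b) := fun d => {x | ∃ j ≤ d, x + (j : ZMod b) ∈ S}
    show min b (#S + (d + 1)) ≤ #(T (d + 1))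
    replace ih : min b (#S + d) ≤ #(T d) := ih
    have hmono : T d ⊆ T (d + 1) := by
      intro x hx
      simp only [T, mem_filter, mem_univ, true_and] at hx ⊢
      obtain ⟨j, hj, hjS⟩ := hx
      exact ⟨j, by omega, hjS⟩
    by_cases hclosed : ∀ x ∈ T d, x - 1 ∈ T d
    · have hTne : (T d).Nonempty := by
        obtain ⟨x, hx⟩ := hS
        exact ⟨x, by simpa [T] using ⟨0, by omega, by simpa using hx⟩⟩
      have := card_le_card hmono
      rw [eq_univ_of_forall_sub_one_mem hTne hclosed, card_univ, card] at this
      omega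
    · push Not at hclosed
      obtain ⟨x, hx, hx1⟩ := hclosed
      have hx1' : x - 1 ∈ T (d + 1) := by
        simp only [T, mem_filter, mem_univ, true_and] at hx ⊢
        obtain ⟨j, hj, hjS⟩ := hx
        exact ⟨j + 1, by omega, by simpa [add_assoc] using hjS⟩
      have := card_le_card (insert_subset hx1' hmono)
      rw [card_insert_of_notMem hx1] at this
      omega

end ZMod

section Arcs

variable {b : ℕ} [NeZero b] {ι : Type*} [Fintype ι] (u : ι → ZMod b) (c : ι → ℝ)

noncomputable def arcMass (θ : ZMod b) (l : ℕ) : ℝ := ∑ i with (u i - θ).val < l, c i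

variable {u c}

theorem arcMass_le_of_add_le (hc : ∀ i, 0 ≤ c i) (θ : ZMod b) {j l l' : ℕ} (h : j + l ≤ l')
    (hl' : l' ≤ b) : arcMass u c (θ + j) l ≤ arcMass u c θ l' := by
  refine sum_le_sum_of_subset_of_nonneg (monotone_filter_right _ fun i _ hi => ?_)
    fun i _ _ => hc i
  rw [← sub_sub, ZMod.val_sub_natCast_lt_iff _ (by omega)] at hi
  omega

theorem sum_arcMass_windows {a k : ℕ} (ha : (k + 1) * a < b) (hb : b ≤ (k + 2) * a)
    (θ : ZMod b) :
    ∑ j ∈ range (k + 1), arcMass u c (θ + (j * a : ℕ)) a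
      + arcMass u c (θ + ((k + 1) * a : ℕ)) (b - (k + 1) * a) = ∑ i, c i := by
  have ha0 : 0 < a := by nlinarith
  have hwindow : ∀ x : ZMod b, ∀ j ∈ range (k + 1),
      (x - (j * a : ℕ)).val < a ↔ x.val / a = j := by
    intro x j hj
    have : j * a + a ≤ b := by rw [mem_range] at hj; nlinarith
    rw [ZMod.val_sub_natCast_lt_iff _ this, Nat.div_eq_iff ha0]
    omega
  have hlast : ∀ x : ZMod b,
      (x - ((k + 1) * a : ℕ)).val < b - (k + 1) * a ↔ x.val / a ∉ range (k + 1) := by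
    intro x
    rw [ZMod.val_sub_natCast_lt_iff _ (by omega), mem_range, not_lt, Nat.le_div_iff_mul_le ha0]
    have := ZMod.val_lt x
    omega
  simp only [arcMass, sum_filter, ← sub_sub]
  rw [sum_comm, ← sum_add_distrib]
  refine sum_congr rfl fun i _ => ?_
  rw [sum_congr rfl fun j hj => if_congr (hwindow (u i - θ) j hj) rfl rfl, sum_ite_eq,
    if_congr (hlast (u i - θ)) rfl rfl]
  split_ifs <;> simp_all

theorem card_le_of_forall_exists_add_mem {G : Type*} [AddGroup G] [Fintype G] [DecidableEq G]
    {H H' : Finset G} {m : ℕ} {x : ℕ → G} {y : G}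
    (h : ∀ θ, (∃ j < m, θ + x j ∈ H) ∨ θ + y ∈ H') :
    Fintype.card G ≤ m * #H + #H' := by
  have hcover : (univ : Finset G) ⊆
      (range m).biUnion (fun j => H.image (· - x j)) ∪ H'.image (· - y) := by
    intro θ _
    rcases h θ with ⟨j, hj, hθ⟩ | hθ
    · exact mem_union_left _ (mem_biUnion.2 ⟨j, mem_range.2 hj, mem_image.2 ⟨_, hθ, by simp⟩⟩)
    · exact mem_union_right _ (mem_image.2 ⟨_, hθ, by simp⟩)
  calc Fintype.card G ≤ #((range m).biUnion (fun j => H.image (· - x j)) ∪ H'.image (· - y)) :=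
        card_le_card hcover
    _ ≤ ∑ j ∈ range m, #(H.image (· - x j)) + #(H'.image (· - y)) :=
        (card_union_le _ _).trans (Nat.add_le_add_right card_biUnion_le _)
    _ = m * #H + #H' := by
        simp [card_image_of_injective _ (sub_left_injective)]

theorem exists_window_lt_arcMass {a k : ℕ} (ha : (k + 1) * a < b) (hb : b ≤ (k + 2) * a)
    {s : ℝ} (hs : (k + 2) * s < ∑ i, c i) (θ : ZMod b) :
    (∃ j < k + 1, s < arcMass u c (θ + (j * a : ℕ)) a) ∨
      s < arcMass u c (θ + ((k + 1) * a : ℕ)) (b - (k + 1) * a) := by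
  by_contra! hlight
  have hsum := sum_arcMass_windows (u := u) (c := c) ha hb θ
  have : ∑ j ∈ range (k + 1), arcMass u c (θ + (j * a : ℕ)) a ≤ ∑ j ∈ range (k + 1), s :=
    sum_le_sum fun j hj => hlight.1 j (mem_range.1 hj)
  rw [sum_const, card_range, nsmul_eq_mul, Nat.cast_succ] at this
  linarith [hlight.2]

theorem le_card_filter_lt_arcMass (hc : ∀ i, 0 ≤ c i) {a k : ℕ} (ha : (k + 1) * a < b)
    (hb : b ≤ (k + 2) * a) {s : ℝ} (hs : (k + 2) * s < ∑ i, c i) :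
    a ≤ #{θ | s < arcMass u c θ a} := by
  obtain ⟨w, hw⟩ : ∃ w, w = b - (k + 1) * a := ⟨_, rfl⟩
  set H : Finset (ZMod b) := {θ | s < arcMass u c θ a}
  set H' : Finset (ZMod b) := {θ | s < arcMass u c θ w}
  have hcover : b ≤ (k + 1) * #H + #H' := by
    refine (ZMod.card b).symm.trans_le (card_le_of_forall_exists_add_mem
      (x := fun j => ((j * a : ℕ) : ZMod b)) (y := ((k + 1) * a : ℕ)) fun θ => ?_)
    simpa [H, H', hw] using exists_window_lt_arcMass (u := u) ha hb hs θ
  by_contra! hlt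
  have hH : (k + 1) * #H < (k + 1) * a := Nat.mul_lt_mul_of_pos_left hlt k.succ_pos
  have hb' : b ≤ (k + 1) * a + a := by linarith
  have haa : a ≤ (k + 1) * a := Nat.le_mul_of_pos_left a k.succ_pos
  rcases H'.eq_empty_or_nonempty with hH' | hH'
  · rw [hH', card_empty] at hcover
    omega
  · have hspread : #{x | ∃ j ≤ a - w, x + (j : ZMod b) ∈ H'} ≤ #H := by
      refine card_le_card fun x hx => ?_
      simp only [H, H', mem_filter, mem_univ, true_and] at hx ⊢
      obtain ⟨j, hj, hjH'⟩ := hx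
      exact hjH'.trans_le (arcMass_le_of_add_le hc x (by omega) (by omega))
    -- With `#H < a`, this forces `#H' < w`, and then `hcover` fails.
    have := (ZMod.min_le_card_filter_exists_add_mem hH' (a - w)).trans hspread
    omega

end Arcs

section ThresholdProb

variable {ι : Type*} [Fintype ι] [DecidableEq ι]

/-- The probability that the bets won, each independently with probability `x`, carry total
stake at least `t`. -/
noncomputable def thresholdProb (c : ι → ℝ) (t x : ℝ) : ℝ :=
  ∑ s : Finset ι with t ≤ ∑ i ∈ s, c i, x ^ #s * (1 - x) ^ #sᶜ

theorem prod_ite_mem_const {M : Type*} [CommMonoid M] (s : Finset ι) (x y : M) :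
    ∏ i, (if i ∈ s then x else y) = x ^ #s * y ^ #sᶜ := by
  rw [prod_ite, prod_const, prod_const, filter_mem_eq_inter, univ_inter, filter_notMem_eq_sdiff,
    compl_eq_univ_sdiff]

theorem card_filter_filter_apply_eq {α : Type*} [Fintype α] (P : α → Prop) [DecidablePred P]
    (s : Finset ι) :
    #{u : ι → α | ({i | P (u i)} : Finset ι) = s} = #{x | P x} ^ #s * #{x | ¬P x} ^ #sᶜ := by
  have : ({u : ι → α | ({i | P (u i)} : Finset ι) = s} : Finset (ι → α)) =
      Fintype.piFinset fun i =>
        if i ∈ s then ({x | P x} : Finset α) else ({x | ¬P x} : Finset α) := by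
    ext u
    simp only [mem_filter, mem_univ, true_and, Fintype.mem_piFinset, Finset.ext_iff]
    refine forall_congr' fun i => ?_
    split_ifs with hi <;> simp [hi]
  rw [this, Fintype.card_piFinset]
  simp only [apply_ite]
  exact prod_ite_mem_const s _ _

theorem card_filter_le_sum_eq_thresholdProb {α : Type*} [Fintype α] [Nonempty α]
    (P : α → Prop) [DecidablePred P] (c : ι → ℝ) (t : ℝ) :
    (#{u : ι → α | t ≤ ∑ i with P (u i), c i} : ℝ) =
      Fintype.card α ^ Fintype.card ι * thresholdProb c t (#{x | P x} / Fintype.card α) := by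
  rw [card_eq_sum_card_fiberwise (f := fun u => ({i | P (u i)} : Finset ι))
    (t := {s | t ≤ ∑ i ∈ s, c i}) (fun u hu => by simpa using hu), thresholdProb, mul_sum]
  push_cast
  refine sum_congr rfl fun s hs => ?_
  have hs' : t ≤ ∑ i ∈ s, c i := by simpa using hs
  rw [filter_filter, filter_congr fun u _ => and_iff_right_of_imp fun h => h ▸ hs',
    card_filter_filter_apply_eq, ← card_add_card_compl s]
  have hcompl : (#{x | ¬P x} : ℝ) = Fintype.card α - #{x | P x} := by
    rw [eq_sub_iff_add_eq, ← Nat.cast_add, add_comm, card_filter_add_card_filter_not, card_univ]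
  have hα : (Fintype.card α : ℝ) ≠ 0 := by positivity
  push_cast
  rw [hcompl, pow_add, one_sub_div hα, div_pow, div_pow]
  field_simp

end ThresholdProb

section CircleModel

variable {b : ℕ} [NeZero b] {ι : Type*} [Fintype ι] {c : ι → ℝ}

theorem card_winning_rotations_le (hc : ∀ i, 0 ≤ c i) (hM : ∑ i, c i ≤ 1)
    {a k : ℕ} (ha : (k + 1) * a < b) (hb : b ≤ (k + 2) * a) {t : ℝ}
    (ht : (k + 1) / (k + 2) < t) (u : ι → ZMod b) :
    #{θ | t ≤ ∑ i with a ≤ (u i - θ).val, c i} ≤ b - a := by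
  have hs : (k + 2) * (∑ i, c i - t) < ∑ i, c i := by
    rw [div_lt_iff₀ (by positivity)] at ht
    nlinarith
  have hlight : ({θ | t ≤ ∑ i with a ≤ (u i - θ).val, c i} : Finset (ZMod b)) ⊆
      ({θ | ∑ i, c i - t < arcMass u c θ a} : Finset (ZMod b))ᶜ := by
    intro θ hθ
    rw [mem_compl, mem_filter, not_and, not_lt]
    intro _
    have := sum_filter_add_sum_filter_not univ (fun i => (u i - θ).val < a) c
    simp only [not_lt] at this
    simp only [mem_filter, mem_univ, true_and] at hθ
    rw [arcMass]
    linarith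
  have := (card_le_card hlight).trans_eq (card_compl _)
  have := le_card_filter_lt_arcMass (u := u) hc ha hb hs
  rw [ZMod.card] at *
  omega

theorem card_winning_configurations_sub_eq [DecidableEq ι] (a : ℕ) (t : ℝ) (θ : ZMod b) :
    #{u : ι → ZMod b | t ≤ ∑ i with a ≤ (u i - θ).val, c i} =
      #{u : ι → ZMod b | t ≤ ∑ i with a ≤ (u i).val, c i} := by
  refine card_nbij' (fun u i => u i - θ) (fun u i => u i + θ) ?_ ?_ ?_ ?_ <;>
    intro u hu <;> simp_all

theorem thresholdProb_sub_div_le [DecidableEq ι] (hc : ∀ i, 0 ≤ c i) (hM : ∑ i, c i ≤ 1)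
    {a k : ℕ} (ha : (k + 1) * a < b) (hb : b ≤ (k + 2) * a) {t : ℝ}
    (ht : (k + 1) / (k + 2) < t) :
    thresholdProb c t ((b - a) / b) ≤ (b - a) / b := by
  set N := #{u : ι → ZMod b | t ≤ ∑ i with a ≤ (u i).val, c i}
  have hdouble : b * N ≤ b ^ Fintype.card ι * (b - a) := by
    calc b * N = ∑ θ : ZMod b, #{u : ι → ZMod b | t ≤ ∑ i with a ≤ (u i - θ).val, c i} := by
          simp [card_winning_configurations_sub_eq, N]
      _ = ∑ u : ι → ZMod b, #{θ | t ≤ ∑ i with a ≤ (u i - θ).val, c i} := by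
          simp only [card_filter]
          exact sum_comm
      _ ≤ ∑ u : ι → ZMod b, (b - a) :=
          sum_le_sum fun u _ => card_winning_rotations_le hc hM ha hb ht u
      _ = b ^ Fintype.card ι * (b - a) := by simp
  have hN := card_filter_le_sum_eq_thresholdProb (ι := ι) (α := ZMod b) (fun x => a ≤ x.val) c t
  have hab : a ≤ b := by nlinarith
  rw [ZMod.card_filter_le_val, ZMod.card, Nat.cast_sub hab] at hN
  have hb0 : (0 : ℝ) < b := by simp [Nat.pos_of_neZero]
  rw [le_div_iff₀ hb0, ← mul_le_mul_iff_of_pos_left (pow_pos hb0 (Fintype.card ι)),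
    ← mul_assoc, ← hN]
  exact_mod_cast (mul_comm _ _).trans_le hdouble

end CircleModel

section Bernoulli

variable {Ω : Type*} {ι : Type*} [Fintype ι] [DecidableEq ι]

noncomputable def winners (β : ι → Ω → ℝ) (ω : Ω) : Finset ι := {i | β i ω = 1}

theorem winners_preimage_singleton (β : ι → Ω → ℝ) (s : Finset ι) :
    winners β ⁻¹' {s} = ⋂ i, β i ⁻¹' (if i ∈ s then {1} else {1}ᶜ) := by
  ext ω
  simp only [winners, Set.mem_preimage, Set.mem_singleton_iff, Finset.ext_iff, mem_filter,
    mem_univ, true_and, Set.mem_iInter]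
  refine forall_congr' fun i => ?_
  split_ifs with hi <;> simp [hi]

variable [MeasurableSpace Ω] {μ : Measure Ω} [IsProbabilityMeasure μ] {β : ι → Ω → ℝ} {p : ℝ}

theorem measure_winners_preimage_singleton (hmeas : ∀ i, Measurable (β i))
    (hβp : ∀ i, μ {ω | β i ω = 1} = ENNReal.ofReal p) (hindep : iIndepFun β μ)
    (hp0 : 0 ≤ p) (hp1 : p ≤ 1) (s : Finset ι) :
    μ (winners β ⁻¹' {s}) = ENNReal.ofReal (p ^ #s * (1 - p) ^ #sᶜ) := by
  have hwin : ∀ i, μ (β i ⁻¹' {1}) = ENNReal.ofReal p := hβp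
  have hlose : ∀ i, μ (β i ⁻¹' {1}ᶜ) = ENNReal.ofReal (1 - p) := by
    intro i
    rw [Set.preimage_compl, measure_compl (hmeas i (measurableSet_singleton 1))
      (measure_ne_top _ _), measure_univ, hwin, ENNReal.ofReal_sub _ hp0, ENNReal.ofReal_one]
  rw [winners_preimage_singleton,
    hindep.meas_iInter fun i => ⟨_, by split_ifs <;> measurability, rfl⟩]
  simp only [apply_ite, hwin, hlose]
  rw [prod_ite_mem_const, ENNReal.ofReal_mul (by positivity), ENNReal.ofReal_pow hp0,
    ENNReal.ofReal_pow (sub_nonneg.2 hp1)]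

theorem toReal_measure_le_sum_mul_eq_thresholdProb (hmeas : ∀ i, Measurable (β i))
    (hval : ∀ i ω, β i ω = 0 ∨ β i ω = 1) (hβp : ∀ i, μ {ω | β i ω = 1} = ENNReal.ofReal p)
    (hindep : iIndepFun β μ) (hp0 : 0 ≤ p) (hp1 : p ≤ 1) (c : ι → ℝ) (t : ℝ) :
    (μ {ω | t ≤ ∑ i, c i * β i ω}).toReal = thresholdProb c t p := by
  have hsum : ∀ ω, ∑ i, c i * β i ω = ∑ i ∈ winners β ω, c i := by
    intro ω
    rw [winners, sum_filter]
    refine sum_congr rfl fun i _ => ?_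
    rcases hval i ω with h | h <;> simp [h]
  have hevent : {ω | t ≤ ∑ i, c i * β i ω} =
      winners β ⁻¹' ↑({s | t ≤ ∑ i ∈ s, c i} : Finset (Finset ι)) := by
    ext ω
    simp [hsum]
  rw [hevent, ← sum_measure_preimage_singleton _ fun s _ => ?_]
  · rw [sum_congr rfl fun s _ => measure_winners_preimage_singleton hmeas hβp hindep hp0 hp1 s,
      ← ENNReal.ofReal_sum_of_nonneg fun s _ => by positivity,
      ENNReal.toReal_ofReal (sum_nonneg fun s _ => by positivity), thresholdProb]
  · rw [winners_preimage_singleton]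
    exact MeasurableSet.iInter fun i => hmeas i (by split_ifs <;> measurability)

end Bernoulli

section FavorableOdds

variable {ι : Type*} [Fintype ι] [DecidableEq ι] {c : ι → ℝ}

theorem continuous_thresholdProb (c : ι → ℝ) (t : ℝ) : Continuous (thresholdProb c t) := by
  unfold thresholdProb
  fun_prop

theorem thresholdProb_natCast_div_le (hc : ∀ i, 0 ≤ c i) (hM : ∑ i, c i ≤ 1) {k n d : ℕ}
    {t : ℝ} (ht : (k + 1) / (k + 2) < t) (hkx : k / (k + 1) < (n / d : ℝ))
    (hxk : (n / d : ℝ) ≤ (k + 1) / (k + 2)) :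
    thresholdProb c t (n / d) ≤ n / d := by
  have hd : d ≠ 0 := by
    rintro rfl
    rw [Nat.cast_zero, div_zero] at hkx
    exact hkx.not_ge (by positivity)
  have : NeZero d := ⟨hd⟩
  have hd0 : (0 : ℝ) < d := by positivity
  have hk1 : (0 : ℝ) < k + 1 := by positivity
  have hk2 : (0 : ℝ) < k + 2 := by positivity
  rw [div_lt_div_iff₀ hk1 hd0] at hkx
  rw [div_le_div_iff₀ hd0 hk2] at hxk
  have hnd : n ≤ d := by
    suffices (n : ℝ) ≤ d by exact_mod_cast this
    nlinarith
  have hlow : (k + 1) * (d - n) < d := by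
    suffices ((k : ℝ) + 1) * ((d : ℝ) - n) < d by exact_mod_cast this
    linarith
  have hup : d ≤ (k + 2) * (d - n) := by
    suffices (d : ℝ) ≤ ((k : ℝ) + 2) * ((d : ℝ) - n) by exact_mod_cast this
    linarith
  simpa [Nat.cast_sub hnd] using thresholdProb_sub_div_le hc hM hlow hup ht

theorem thresholdProb_le_self (hc : ∀ i, 0 ≤ c i) (hM : ∑ i, c i ≤ 1) {k : ℕ} {t : ℝ}
    (ht : (k + 1) / (k + 2) < t) {x : ℝ} (hkx : k / (k + 1) < x) (hxk : x ≤ (k + 1) / (k + 2)) :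
    thresholdProb c t x ≤ x := by
  have hrat : Set.Ioo ((k : ℝ) / (k + 1)) ((k + 1) / (k + 2)) ∩ Set.range ((↑) : ℚ → ℝ) ⊆
      {y | thresholdProb c t y ≤ y} := by
    rintro _ ⟨⟨hkq, hqk⟩, q, rfl⟩
    have hq : (q : ℝ) = q.num.toNat / q.den := by
      have : 0 ≤ q.num :=
        Rat.num_nonneg.2 (by exact_mod_cast (by positivity : (0 : ℝ) ≤ _).trans hkq.le)
      rw [Rat.cast_def]
      congr 1
      exact_mod_cast (Int.toNat_of_nonneg this).symm
    rw [hq] at hkq hqk ⊢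
    exact thresholdProb_natCast_div_le hc hM ht hkq hqk.le
  have hx : x ∈ closure (Set.Ioo ((k : ℝ) / (k + 1)) ((k + 1) / (k + 2))) := by
    rw [closure_Ioo (hkx.trans_le hxk).ne]
    exact ⟨hkx.le, hxk⟩
  have := closure_mono (Rat.denseRange_cast.open_subset_closure_inter isOpen_Ioo) hx
  rw [closure_closure] at this
  exact (isClosed_le (continuous_thresholdProb c t) continuous_id).closure_subset_iff.2 hrat this

end FavorableOdds

theorem exists_tsum_mul_le_sum_range_add {c : ℕ → ℝ} (hc : ∀ i, 0 ≤ c i) (hs : Summable c)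
    {ε : ℝ} (hε : 0 < ε) :
    ∃ n, ∀ x : ℕ → ℝ, (∀ i, 0 ≤ x i) → (∀ i, x i ≤ 1) →
      ∑' i, c i * x i ≤ ∑ i ∈ range n, c i * x i + ε := by
  obtain ⟨n, hn⟩ := ((tendsto_sum_nat_add c).eventually (gt_mem_nhds hε)).exists
  refine ⟨n, fun x hx0 hx1 => ?_⟩
  have hle : ∀ i, c i * x i ≤ c i := fun i => mul_le_of_le_one_right (hc i) (hx1 i)
  have hcx : Summable fun i => c i * x i :=
    hs.of_nonneg_of_le (fun i => mul_nonneg (hc i) (hx0 i)) hle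
  rw [← hcx.sum_add_tsum_nat_add n]
  gcongr
  exact (hcx.comp_injective (add_left_injective n)).tsum_le_tsum (fun i => hle _)
    (hs.comp_injective (add_left_injective n)) |>.trans hn.le

theorem toReal_measure_le_tsum_mul_le {Ω : Type*} [MeasurableSpace Ω] {μ : Measure Ω}
    [IsProbabilityMeasure μ] {p t : ℝ} {β : ℕ → Ω → ℝ} (hmeas : ∀ i, Measurable (β i))
    (hval : ∀ i ω, β i ω = 0 ∨ β i ω = 1) (hβp : ∀ i, μ {ω | β i ω = 1} = ENNReal.ofReal p)
    (hindep : iIndepFun β μ) {k : ℕ} (hkp : (k : ℝ) / (k + 1) < p)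
    (hpk : p ≤ (k + 1 : ℝ) / (k + 2)) (hkt : (k + 1 : ℝ) / (k + 2) < t) {c : ℕ → ℝ}
    (hc : ∀ i, 0 ≤ c i) (hs : Summable c) (hc1 : ∑' i, c i ≤ 1) :
    (μ {ω | t ≤ ∑' i, c i * β i ω}).toReal ≤ p := by
  have hp0 : 0 ≤ p := (by positivity : (0 : ℝ) ≤ k / (k + 1)).trans hkp.le
  have hp1 : p ≤ 1 := hpk.trans ((div_le_one (by positivity)).2 (by linarith))
  obtain ⟨t', hkt', ht't⟩ := exists_between hkt
  obtain ⟨n, hn⟩ := exists_tsum_mul_le_sum_range_add hc hs (sub_pos.2 ht't)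
  have hsub : {ω | t ≤ ∑' i, c i * β i ω} ⊆ {ω | t' ≤ ∑ i : Fin n, c i * β i ω} := by
    intro ω hω
    have := hn (β · ω) (fun i => by rcases hval i ω with h | h <;> simp [h])
      (fun i => by rcases hval i ω with h | h <;> simp [h])
    simp only [Set.mem_ofPred_eq, Fin.sum_univ_eq_sum_range (fun i => c i * β i ω)] at hω ⊢
    linarith
  have hM : ∑ i : Fin n, c i ≤ 1 := by
    rw [Fin.sum_univ_eq_sum_range]
    exact (hs.sum_le_tsum _ fun i _ => hc i).trans hc1
  calc (μ {ω | t ≤ ∑' i, c i * β i ω}).toReal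
      ≤ (μ {ω | t' ≤ ∑ i : Fin n, c i * β i ω}).toReal :=
        ENNReal.toReal_mono (measure_ne_top _ _) (measure_mono hsub)
    _ = thresholdProb (fun i : Fin n => c i) t' p :=
        toReal_measure_le_sum_mul_eq_thresholdProb (β := fun i : Fin n => β i)
          (fun i => hmeas i) (fun i => hval i) (fun i => hβp i)
          (hindep.precomp Fin.val_injective) hp0 hp1 _ _
    _ ≤ p := thresholdProb_le_self (c := fun i : Fin n => c i) (fun i => hc i) hM hkt' hkp hpk

theorem boldPlay_optimal_favorable_odds_general {Ω : Type*} [MeasurableSpace Ω]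
    (μ : Measure Ω) [IsProbabilityMeasure μ] (p t : ℝ)
    (β : ℕ → Ω → ℝ) (hmeas : ∀ i, Measurable (β i))
    (hval : ∀ i ω, β i ω = 0 ∨ β i ω = 1)
    (hβp : ∀ i, μ {ω | β i ω = 1} = ENNReal.ofReal p)
    (hindep : iIndepFun β μ)
    (k : ℕ)
    (hkp : (k : ℝ) / (k + 1) < p) (hpk : p ≤ (k + 1 : ℝ) / (k + 2))
    (hkt : (k + 1 : ℝ) / (k + 2) < t) (ht1 : t ≤ 1) :
    (∀ c : ℕ → ℝ, (∀ i, 0 ≤ c i) → (∑' i, c i) = 1 →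
      (μ {ω | t ≤ ∑' i, c i * β i ω}).toReal ≤ p) ∧
    (μ {ω | t ≤ β 0 ω}).toReal = p := by
  refine ⟨fun c hc hc1 => ?_, ?_⟩
  · have hs : Summable c := by
      by_contra h
      simp [tsum_eq_zero_of_not_summable h] at hc1
    exact toReal_measure_le_tsum_mul_le hmeas hval hβp hindep hkp hpk hkt hc hs hc1.le
  · have ht0 : 0 < t := (by positivity : (0 : ℝ) < (k + 1) / (k + 2)).trans hkt
    have hwin : {ω | t ≤ β 0 ω} = {ω | β 0 ω = 1} := by
      ext ω
      rcases hval 0 ω with h | h <;> simp [h, ht1, ht0.not_ge]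
    have hp0 : 0 ≤ p := (by positivity : (0 : ℝ) ≤ k / (k + 1)).trans hkp.le
    rw [hwin, hβp, ENNReal.toReal_ofReal hp0]

/-- **Favorable odds: bold play is optimal.** If `k/(k+1) < p ≤ (k+1)/(k+2) < t ≤ 1`
for a positive integer `k`, then for every nonnegative stake sequence `(c i)` summing
to `1` placed on iid Bernoulli(p) bets, `P(∑ c i * β i ≥ t) ≤ p`, with equality for
the single stake `c 0 = 1` (bold play). -/
theorem boldPlay_optimal_favorable_odds {Ω : Type*} [MeasurableSpace Ω]
    (μ : Measure Ω) [IsProbabilityMeasure μ] (p t : ℝ)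
    (β : ℕ → Ω → ℝ) (hmeas : ∀ i, Measurable (β i))
    (hval : ∀ i ω, β i ω = 0 ∨ β i ω = 1)
    (hβp : ∀ i, μ {ω | β i ω = 1} = ENNReal.ofReal p)
    (hindep : iIndepFun β μ)
    (k : ℕ) (hk : 0 < k)
    (hkp : (k : ℝ) / (k + 1) < p) (hpk : p ≤ (k + 1 : ℝ) / (k + 2))
    (hkt : (k + 1 : ℝ) / (k + 2) < t) (ht1 : t ≤ 1) :
    (∀ c : ℕ → ℝ, (∀ i, 0 ≤ c i) → (∑' i, c i) = 1 →
      (μ {ω | t ≤ ∑' i, c i * β i ω}).toReal ≤ p) ∧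
    (μ {ω | t ≤ β 0 ω}).toReal = p :=
  boldPlay_optimal_favorable_odds_general μ p t β hmeas hval hβp hindep k hkp hpk hkt ht1
end

section
/- Let p = t = 2/3 (the case k = 1 of the diagonal). Then the maximum of P(Σ c_i β_i ≥ 2/3) over nonnegative sequences (c_i) summing to 1 is attained by c_1 = c_2 = c_3 = 1/3, and this maximum equals P(Bin(3, 2/3) ≥ 2) = 20/27, which exceeds the bold play value p = 2/3. -/
/-!
A Bernoulli(2/3) variable is the indicator that a uniformly random colour in `{0, 1, 2}` differs
from a fixed colour `k`. Colouring the indices independently and uniformly, the event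
`2/3 ≤ ∑ c i * β i` thus has, for each of the three `k`, the probability that the total stake
`colourWeight c u k` of the indices coloured `k` is at most `1/3`. The three stakes add up to `1`,
so a colouring lies in at most two of these three events unless all three stakes equal `1/3`:
`3 P ≤ 2 + P (all stakes equal 1/3)`. After truncating to finitely many indices with a tail `ε`
below two positive stakes `c a`, `c b`, the last event relaxes to all stakes lying in a window of
width `ε`; whatever the other colours, at most two of the nine colour pairs of `a` and `b` achieve
this. So `3 P ≤ 2 + 2/9`, i.e. `P ≤ 20/27`, and three equal stakes attain it: `20` of the `27`
colourings of three indices give colour `0` to at most one of them.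
-/

open MeasureTheory ProbabilityTheory Finset Fintype

section Colouring
variable {ι κ : Type*} [Fintype ι] [DecidableEq κ]

lemma pair_eq_or_swap_of_forall_mem_Icc {σ : κ → ℝ} {p q α ε : ℝ} (hp : ε < p) (hq : ε < q)
    {a b x y : κ}
    (hab : ∀ k, σ k + (if a = k then p else 0) + (if b = k then q else 0) ∈ Set.Icc α (α + ε))
    (hxy : ∀ k, σ k + (if x = k then p else 0) + (if y = k then q else 0) ∈ Set.Icc α (α + ε)) :
    (x, y) = (a, b) ∨ (x, y) = (b, a) := by
  -- the window is narrower than `p` and `q`, so both pairs hit every colour equally often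
  have key : ∀ k, ((a = k ∧ b = k) ↔ (x = k ∧ y = k)) ∧ ((a = k ∨ b = k) ↔ (x = k ∨ y = k)) := by
    intro k
    obtain ⟨h1, h2⟩ := hab k
    obtain ⟨h3, h4⟩ := hxy k
    split_ifs at h1 h2 h3 h4 <;>
      refine ⟨⟨fun h => ?_, fun h => ?_⟩, ⟨fun h => ?_, fun h => ?_⟩⟩ <;>
      first | tauto | (exfalso; linarith)
  simp only [Prod.mk.injEq]
  by_cases hab' : a = b
  · subst hab'
    exact Or.inl ((key a).1.mp ⟨rfl, rfl⟩)
  rcases (key a).2.mp (Or.inl rfl) with ha | ha <;>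
    rcases (key b).2.mp (Or.inr rfl) with hb | hb
  · exact absurd (ha.symm.trans hb) hab'
  · exact Or.inl ⟨ha, hb⟩
  · exact Or.inr ⟨hb, ha⟩
  · exact absurd (ha.symm.trans hb) hab'

def colourWeight (d : ι → ℝ) (u : ι → κ) (k : κ) : ℝ := ∑ i with u i = k, d i

lemma sum_colourWeight [Fintype κ] (d : ι → ℝ) (u : ι → κ) :
    ∑ k, colourWeight d u k = ∑ i, d i :=
  sum_fiberwise univ u d

lemma sum_mul_ite_eq_sub_colourWeight (d : ι → ℝ) (u : ι → κ) (k : κ) :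
    ∑ i, d i * (if u i = k then 0 else 1) = ∑ i, d i - colourWeight d u k := by
  rw [colourWeight, sum_filter, eq_sub_iff_add_eq, ← sum_add_distrib]
  exact sum_congr rfl fun i _ => by split_ifs <;> simp

lemma colourWeight_eq_sum_compl_add_add [DecidableEq ι] (d : ι → ℝ) (u : ι → κ) (k : κ)
    {i₀ j₀ : ι} (hij : i₀ ≠ j₀) :
    colourWeight d u k = ∑ i ∈ {i₀, j₀}ᶜ, (if u i = k then d i else 0)
      + (if u i₀ = k then d i₀ else 0) + (if u j₀ = k then d j₀ else 0) := by
  rw [colourWeight, sum_filter, ← sum_compl_add_sum {i₀, j₀}, sum_pair hij, add_assoc]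

lemma card_colourWeight_mem_Icc_le [DecidableEq ι] [Fintype κ] {d : ι → ℝ} {α ε : ℝ}
    {i₀ j₀ : ι} (hij : i₀ ≠ j₀) (hi : ε < d i₀) (hj : ε < d j₀) :
    #{u : ι → κ | ∀ k, colourWeight d u k ∈ Set.Icc α (α + ε)} ≤
      2 * card κ ^ (card ι - 2) := by
  set W : Finset (ι → κ) := {u | ∀ k, colourWeight d u k ∈ Set.Icc α (α + ε)}
  let restrict (u : ι → κ) : ({i₀, j₀}ᶜ : Finset ι) → κ := fun i => u i
  have hcard : #(univ : Finset (({i₀, j₀}ᶜ : Finset ι) → κ)) = card κ ^ (card ι - 2) := by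
    rw [card_univ, Fintype.card_fun, Fintype.card_coe, card_compl, card_pair hij]
  rw [← hcard]
  refine card_le_mul_card_image_of_maps_to (f := restrict) (fun _ _ => mem_univ _) 2
    fun r _ => ?_
  set F := {u ∈ W | restrict u = r}
  rcases F.eq_empty_or_nonempty with hF | ⟨v, hv⟩
  · simp [hF]
  have hpair : ∀ u ∈ F, (u i₀, u j₀) ∈ ({(v i₀, v j₀), (v j₀, v i₀)} : Finset (κ × κ)) := by
    intro u hu
    simp only [F, W, mem_filter, mem_univ, true_and] at hu hv
    have hrest : ∀ k, ∑ i ∈ {i₀, j₀}ᶜ, (if u i = k then d i else 0) =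
        ∑ i ∈ {i₀, j₀}ᶜ, (if v i = k then d i else 0) := fun k =>
      sum_congr rfl fun i hi => by
        rw [show u i = v i from congrFun (hu.2.trans hv.2.symm) ⟨i, hi⟩]
    have hu' := fun k => hrest k ▸ colourWeight_eq_sum_compl_add_add d u k hij ▸ hu.1 k
    have hv' := fun k => colourWeight_eq_sum_compl_add_add d v k hij ▸ hv.1 k
    simpa using pair_eq_or_swap_of_forall_mem_Icc hi hj hv' hu'
  have hinj : Set.InjOn (fun u : ι → κ => (u i₀, u j₀)) F := by
    intro u hu w hw huw
    simp only [F, coe_filter, Set.mem_ofPred_eq] at hu hw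
    obtain ⟨hu0, hu1⟩ := Prod.mk.inj huw
    funext i
    by_cases h0 : i = i₀
    · exact h0 ▸ hu0
    by_cases h1 : i = j₀
    · exact h1 ▸ hu1
    exact congrFun (hu.2.trans hw.2.symm) ⟨i, by simp [h0, h1]⟩
  exact (card_le_card_of_injOn _ hpair hinj).trans card_le_two

end Colouring

noncomputable def uniformColouring (ι κ : Type*) [Fintype ι] [Fintype κ] [Nonempty κ]
    [MeasurableSpace κ] : Measure (ι → κ) :=
  Measure.pi fun _ => (PMF.uniformOfFintype κ).toMeasure

section UniformColouring
variable {ι κ : Type*} [Fintype ι] [Fintype κ] [Nonempty κ] [MeasurableSpace κ]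

instance : IsProbabilityMeasure (uniformColouring ι κ) := by
  unfold uniformColouring
  infer_instance

lemma measureReal_uniformColouring [MeasurableSingletonClass κ] (S : Finset (ι → κ)) :
    (uniformColouring ι κ).real S = #S / card κ ^ card ι := by
  have hsingle (u : ι → κ) : (uniformColouring ι κ).real {u} = (card κ ^ card ι : ℝ)⁻¹ := by
    simp [uniformColouring, measureReal_def, Measure.pi_singleton,
      PMF.toMeasure_apply_singleton _ _ (measurableSet_singleton _)]
  rw [← sum_measureReal_singleton, sum_congr rfl fun u _ => hsingle u]
  simp [div_eq_mul_inv]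

lemma uniformColouring_setOf_ite_eq_one (i : ι) (k : Fin 3) :
    uniformColouring ι (Fin 3) {u | (if u i = k then (0 : ℝ) else 1) = 1} =
      ENNReal.ofReal (2 / 3) := by
  have hset : {u : ι → Fin 3 | (if u i = k then (0 : ℝ) else 1) = 1} =
      Function.eval i ⁻¹' ({k}ᶜ : Set (Fin 3)) := by
    ext u
    simp
  rw [hset, uniformColouring, (measurePreserving_eval _ i).measure_preimage (by measurability),
    PMF.toMeasure_uniformOfFintype_apply _ (by measurability), Fintype.card_compl_set,
    ENNReal.ofReal_div_of_pos (by norm_num)]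
  simp

end UniformColouring

section ZeroOne
variable {α γ : Type*}

open Classical in
lemma preimage_eq_ite_of_forall_eq_zero_or_eq_one {Z : α → ℝ} (hZ : ∀ a, Z a = 0 ∨ Z a = 1)
    (s : Set ℝ) :
    Z ⁻¹' s = if (1 : ℝ) ∈ s then (if (0 : ℝ) ∈ s then Set.univ else {a | Z a = 1})
      else (if (0 : ℝ) ∈ s then {a | Z a = 1}ᶜ else ∅) := by
  ext a
  rcases hZ a with ha | ha <;> split_ifs <;> simp_all

lemma identDistrib_of_forall_eq_zero_or_eq_one [MeasurableSpace α] [MeasurableSpace γ]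
    {μ : Measure α} {ν : Measure γ} [IsProbabilityMeasure μ] [IsProbabilityMeasure ν]
    {X : α → ℝ} {Y : γ → ℝ}
    (hX : Measurable X) (hY : Measurable Y) (hX01 : ∀ a, X a = 0 ∨ X a = 1)
    (hY01 : ∀ c, Y c = 0 ∨ Y c = 1) (h : μ {a | X a = 1} = ν {c | Y c = 1}) :
    IdentDistrib X Y μ ν where
  aemeasurable_fst := hX.aemeasurable
  aemeasurable_snd := hY.aemeasurable
  map_eq := by
    ext s hs
    rw [Measure.map_apply hX hs, Measure.map_apply hY hs,
      preimage_eq_ite_of_forall_eq_zero_or_eq_one hX01,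
      preimage_eq_ite_of_forall_eq_zero_or_eq_one hY01]
    split_ifs
    · simp
    · exact h
    · rw [prob_compl_eq_one_sub (measurableSet_eq_fun hX measurable_const),
        prob_compl_eq_one_sub (measurableSet_eq_fun hY measurable_const)]
      exact congrArg (1 - ·) h
    · simp

end ZeroOne

lemma measureReal_add_add_le_two_add_inter {α : Type*} [MeasurableSpace α] {μ : Measure α}
    [IsProbabilityMeasure μ] {A B C : Set α} (hB : MeasurableSet B) (hC : MeasurableSet C) :
    μ.real A + μ.real B + μ.real C ≤ 2 + μ.real (A ∩ B ∩ C) := by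
  have hAB := measureReal_union_add_inter (μ := μ) (s := A) hB
  have hABC := measureReal_union_add_inter (μ := μ) (s := A ∩ B) hC
  have h1 : μ.real (A ∪ B) ≤ 1 := measureReal_le_one
  have h2 : μ.real (A ∩ B ∪ C) ≤ 1 := measureReal_le_one
  linarith

lemma sum_measureReal_colourWeight_le_one_third_le {ι : Type*} [Fintype ι] [DecidableEq ι]
    {d : ι → ℝ} {ε : ℝ} (hsum : ∑ i, d i = 1 - ε) {i₀ j₀ : ι} (hij : i₀ ≠ j₀)
    (hi : ε < d i₀) (hj : ε < d j₀) :
    ∑ k : Fin 3, (uniformColouring ι (Fin 3)).real {u | colourWeight d u k ≤ 1 / 3} ≤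
      20 / 9 := by
  set ν := uniformColouring ι (Fin 3)
  set D : Fin 3 → Set (ι → Fin 3) := fun k => {u | colourWeight d u k ≤ 1 / 3}
  set W : Finset (ι → Fin 3) :=
    {u | ∀ k, colourWeight d u k ∈ Set.Icc (1 / 3 - ε) (1 / 3 - ε + ε)}
  have hDW : D 0 ∩ D 1 ∩ D 2 ⊆ W := by
    rintro u ⟨⟨h0, h1⟩, h2⟩
    have htotal := sum_colourWeight d u
    rw [Fin.sum_univ_three, hsum] at htotal
    simp only [D, Set.mem_ofPred_eq] at h0 h1 h2
    simp only [W, coe_filter, mem_univ, true_and, Set.mem_ofPred_eq, Set.mem_Icc]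
    intro k
    fin_cases k <;> simp only [Fin.zero_eta, Fin.mk_one, Fin.reduceFinMk] <;>
      constructor <;> linarith
  obtain ⟨m, hm⟩ : ∃ m, card ι = m + 2 := by
    have := Finset.card_le_univ {i₀, j₀}
    rw [card_pair hij] at this
    exact ⟨card ι - 2, by omega⟩
  have hW : #W ≤ 2 * 3 ^ m := by
    have h := card_colourWeight_mem_Icc_le (κ := Fin 3) (α := 1 / 3 - ε) hij hi hj
    rw [Fintype.card_fin, hm, Nat.add_sub_cancel] at h
    -- the two filters differ only in their decidability instances
    convert h using 3
  calc ∑ k, ν.real (D k) = ν.real (D 0) + ν.real (D 1) + ν.real (D 2) := Fin.sum_univ_three _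
    _ ≤ 2 + ν.real (D 0 ∩ D 1 ∩ D 2) :=
      measureReal_add_add_le_two_add_inter (Set.toFinite _).measurableSet
        (Set.toFinite _).measurableSet
    _ ≤ 2 + ν.real W := by linarith [measureReal_mono (μ := ν) hDW]
    _ = 2 + #W / 3 ^ (m + 2) := by rw [measureReal_uniformColouring, hm]; simp
    _ ≤ 2 + 2 * 3 ^ m / 3 ^ (m + 2) := by gcongr; exact_mod_cast hW
    _ = 20 / 9 := by rw [pow_add]; field_simp; norm_num

lemma tsum_le_sum_range_add_tsum_nat_add {f g : ℕ → ℝ} (hf : 0 ≤ f) (hfg : f ≤ g)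
    (hg : Summable g) (n : ℕ) : ∑' i, f i ≤ ∑ i ∈ range n, f i + ∑' i, g (i + n) := by
  have hfs : Summable f := hg.of_nonneg_of_le hf hfg
  rw [← hfs.sum_add_tsum_nat_add n]
  linarith [((summable_nat_add_iff n).2 hfs).tsum_mono ((summable_nat_add_iff n).2 hg)
    fun i => hfg (i + n)]

section FiniteStakes
variable {Ω ι : Type*} [MeasurableSpace Ω] [Fintype ι] {μ : Measure Ω} [IsProbabilityMeasure μ]
  {β : ι → Ω → ℝ}

lemma identDistrib_uniformColouring (hmeas : ∀ i, Measurable (β i))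
    (hval : ∀ i ω, β i ω = 0 ∨ β i ω = 1)
    (hβp : ∀ i, μ {ω | β i ω = 1} = ENNReal.ofReal (2 / 3)) (hindep : iIndepFun β μ)
    (k : Fin 3) :
    IdentDistrib (fun ω i => β i ω) (fun u i => if u i = k then (0 : ℝ) else 1) μ
      (uniformColouring ι (Fin 3)) := by
  refine IdentDistrib.pi (fun i => ?_) hindep
    (iIndepFun_pi (X := fun _ a => if a = k then (0 : ℝ) else 1) fun _ => by fun_prop)
  refine identDistrib_of_forall_eq_zero_or_eq_one (hmeas i) (by fun_prop) (hval i)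
    (fun u => by split_ifs <;> simp) ?_
  rw [hβp, uniformColouring_setOf_ite_eq_one]

lemma measureReal_le_sum_mul_eq_colourWeight (hmeas : ∀ i, Measurable (β i))
    (hval : ∀ i ω, β i ω = 0 ∨ β i ω = 1)
    (hβp : ∀ i, μ {ω | β i ω = 1} = ENNReal.ofReal (2 / 3)) (hindep : iIndepFun β μ)
    (d : ι → ℝ) (t : ℝ) (k : Fin 3) :
    μ.real {ω | t ≤ ∑ i, d i * β i ω} =
      (uniformColouring ι (Fin 3)).real {u | colourWeight d u k ≤ ∑ i, d i - t} := by
  have hset : {u | colourWeight d u k ≤ ∑ i, d i - t} =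
      (fun u i => if u i = k then (0 : ℝ) else 1) ⁻¹' {v | t ≤ ∑ i, d i * v i} := by
    ext u
    simp only [Set.mem_preimage, Set.mem_ofPred_eq, sum_mul_ite_eq_sub_colourWeight]
    constructor <;> intro <;> linarith
  rw [hset]
  exact congrArg ENNReal.toReal
    ((identDistrib_uniformColouring hmeas hval hβp hindep k).measure_mem_eq
      (s := {v | t ≤ ∑ i, d i * v i}) (measurableSet_le measurable_const (by fun_prop)))

lemma measureReal_two_thirds_sub_le_sum_mul_le [DecidableEq ι] (hmeas : ∀ i, Measurable (β i))
    (hval : ∀ i ω, β i ω = 0 ∨ β i ω = 1)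
    (hβp : ∀ i, μ {ω | β i ω = 1} = ENNReal.ofReal (2 / 3)) (hindep : iIndepFun β μ)
    {d : ι → ℝ} {ε : ℝ} (hsum : ∑ i, d i = 1 - ε) {i₀ j₀ : ι} (hij : i₀ ≠ j₀)
    (hi : ε < d i₀) (hj : ε < d j₀) :
    μ.real {ω | 2 / 3 - ε ≤ ∑ i, d i * β i ω} ≤ 20 / 27 := by
  have hk (k : Fin 3) : μ.real {ω | 2 / 3 - ε ≤ ∑ i, d i * β i ω} =
      (uniformColouring ι (Fin 3)).real {u | colourWeight d u k ≤ 1 / 3} := by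
    rw [measureReal_le_sum_mul_eq_colourWeight hmeas hval hβp hindep d _ k, hsum]
    ring_nf
  have h := sum_measureReal_colourWeight_le_one_third_le hsum hij hi hj
  simp only [← hk, sum_const, card_univ, Fintype.card_fin, nsmul_eq_mul] at h
  linarith

end FiniteStakes

section Stakes
variable {Ω : Type*} [MeasurableSpace Ω] {μ : Measure Ω} {β : ℕ → Ω → ℝ}

lemma measureReal_two_thirds_le_tsum_mul_eq_of_forall_ne (hval : ∀ i ω, β i ω = 0 ∨ β i ω = 1)
    (hβp : ∀ i, μ {ω | β i ω = 1} = ENNReal.ofReal (2 / 3)) {c : ℕ → ℝ} (hc1 : ∑' i, c i = 1)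
    {a : ℕ} (hc : ∀ j ≠ a, c j = 0) :
    μ.real {ω | 2 / 3 ≤ ∑' i, c i * β i ω} = 2 / 3 := by
  have hca : c a = 1 := by rwa [tsum_eq_single a hc] at hc1
  have hset : {ω | 2 / 3 ≤ ∑' i, c i * β i ω} = {ω | β a ω = 1} := by
    ext ω
    rw [Set.mem_ofPred_eq, Set.mem_ofPred_eq,
      tsum_eq_single a fun j hj => by rw [hc j hj, zero_mul], hca, one_mul]
    rcases hval a ω with h | h <;> rw [h] <;> norm_num
  rw [measureReal_def, hset, hβp, ENNReal.toReal_ofReal (by norm_num)]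

variable [IsProbabilityMeasure μ]

lemma measureReal_two_thirds_le_tsum_mul_le_of_two_pos (hmeas : ∀ i, Measurable (β i))
    (hval : ∀ i ω, β i ω = 0 ∨ β i ω = 1)
    (hβp : ∀ i, μ {ω | β i ω = 1} = ENNReal.ofReal (2 / 3)) (hindep : iIndepFun β μ)
    {c : ℕ → ℝ} (hc : ∀ i, 0 ≤ c i) (hc1 : ∑' i, c i = 1) {a b : ℕ} (hab : a ≠ b)
    (ha : 0 < c a) (hb : 0 < c b) :
    μ.real {ω | 2 / 3 ≤ ∑' i, c i * β i ω} ≤ 20 / 27 := by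
  have hsc : Summable c := by
    by_contra h
    rw [tsum_eq_zero_of_not_summable h] at hc1
    exact zero_ne_one hc1
  obtain ⟨n, htail, hn⟩ :=
    (((tendsto_sum_nat_add c).eventually (gt_mem_nhds (lt_min ha hb))).and
      (Filter.eventually_gt_atTop (max a b))).exists
  set ε := ∑' i, c (i + n)
  have hsum : ∑ i : Fin n, c i = 1 - ε := by
    rw [Fin.sum_univ_eq_sum_range (fun i => c i), ← hc1, ← hsc.sum_add_tsum_nat_add n]
    ring
  have hsub : {ω | 2 / 3 ≤ ∑' i, c i * β i ω} ⊆
      {ω | 2 / 3 - ε ≤ ∑ i : Fin n, c i * β i ω} := by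
    intro ω hω
    have hβ01 (i : ℕ) : 0 ≤ β i ω ∧ β i ω ≤ 1 := by rcases hval i ω with h | h <;> simp [h]
    have := tsum_le_sum_range_add_tsum_nat_add (f := fun i => c i * β i ω)
      (fun i => mul_nonneg (hc i) (hβ01 i).1)
      (fun i => mul_le_of_le_one_right (hc i) (hβ01 i).2) hsc n
    simp only [Set.mem_ofPred_eq, Fin.sum_univ_eq_sum_range (fun i => c i * β i ω)] at hω ⊢
    linarith
  calc _ ≤ _ := measureReal_mono hsub
    _ ≤ 20 / 27 :=
      measureReal_two_thirds_sub_le_sum_mul_le (β := fun i : Fin n => β i) (fun i => hmeas i)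
        (fun i => hval i) (fun i => hβp i) (hindep.precomp Fin.val_injective) hsum
        (i₀ := ⟨a, by omega⟩) (j₀ := ⟨b, by omega⟩) (by simpa [Fin.ext_iff] using hab)
        (htail.trans_le (min_le_left _ _)) (htail.trans_le (min_le_right _ _))

lemma measureReal_two_thirds_le_tsum_mul_le (hmeas : ∀ i, Measurable (β i))
    (hval : ∀ i ω, β i ω = 0 ∨ β i ω = 1)
    (hβp : ∀ i, μ {ω | β i ω = 1} = ENNReal.ofReal (2 / 3)) (hindep : iIndepFun β μ)
    {c : ℕ → ℝ} (hc : ∀ i, 0 ≤ c i) (hc1 : ∑' i, c i = 1) :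
    μ.real {ω | 2 / 3 ≤ ∑' i, c i * β i ω} ≤ 20 / 27 := by
  by_cases h : ∃ a b, a ≠ b ∧ 0 < c a ∧ 0 < c b
  · obtain ⟨a, b, hab, ha, hb⟩ := h
    exact measureReal_two_thirds_le_tsum_mul_le_of_two_pos hmeas hval hβp hindep hc hc1 hab ha hb
  push Not at h
  obtain ⟨a, ha⟩ : ∃ a, 0 < c a := by
    by_contra! h0
    simp [fun i => le_antisymm (h0 i) (hc i)] at hc1
  rw [measureReal_two_thirds_le_tsum_mul_eq_of_forall_ne hval hβp hc1
    fun j hj => le_antisymm (h a j hj.symm ha) (hc j)]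
  norm_num

lemma measureReal_three_equal_stakes_eq (hmeas : ∀ i, Measurable (β i))
    (hval : ∀ i ω, β i ω = 0 ∨ β i ω = 1)
    (hβp : ∀ i, μ {ω | β i ω = 1} = ENNReal.ofReal (2 / 3)) (hindep : iIndepFun β μ) :
    μ.real {ω | 2 / 3 ≤ ∑' i, (if i < 3 then (1 : ℝ) / 3 else 0) * β i ω} = 20 / 27 := by
  have htsum (ω : Ω) : ∑' i, (if i < 3 then (1 : ℝ) / 3 else 0) * β i ω =
      ∑ i : Fin 3, 1 / 3 * β i ω := by
    rw [tsum_eq_sum (s := range 3) fun i hi => by simp_all,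
      Fin.sum_univ_eq_sum_range (fun i => 1 / 3 * β i ω)]
    exact sum_congr rfl fun i hi => by rw [if_pos (mem_range.1 hi)]
  simp_rw [htsum]
  rw [measureReal_le_sum_mul_eq_colourWeight (β := fun i : Fin 3 => β i) (fun i => hmeas i)
    (fun i => hval i) (fun i => hβp i) (hindep.precomp Fin.val_injective) (fun _ => 1 / 3) _ 0]
  have hset : {u : Fin 3 → Fin 3 | colourWeight (fun _ => 1 / 3) u 0 ≤ ∑ _i : Fin 3, 1 / 3 - 2 / 3}
      = ↑({u | #{i | u i = 0} ≤ 1} : Finset (Fin 3 → Fin 3)) := by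
    ext u
    simp only [colourWeight, sum_const, nsmul_eq_mul, card_univ, Fintype.card_fin,
      Set.mem_ofPred_eq, coe_filter, mem_univ, true_and]
    rw [← Nat.cast_le (α := ℝ)]
    constructor <;> intro <;> norm_num at * <;> linarith
  rw [hset, measureReal_uniformColouring,
    (by decide : #({u | #{i | u i = 0} ≤ 1} : Finset (Fin 3 → Fin 3)) = 20)]
  norm_num

end Stakes

/-- **Bold play is not optimal at `p = t = 2/3`.** For iid Bernoulli(2/3) random
variables, the maximum of `P(∑ c i * β i ≥ 2/3)` over nonnegative sequences summing
to `1` is attained by `c 0 = c 1 = c 2 = 1/3`; it equals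
`P(Bin(3, 2/3) ≥ 2) = 20/27`, which exceeds the bold play value `2/3`. -/
theorem three_equal_stakes_optimal_at_two_thirds {Ω : Type*} [MeasurableSpace Ω]
    (μ : Measure Ω) [IsProbabilityMeasure μ]
    (β : ℕ → Ω → ℝ) (hmeas : ∀ i, Measurable (β i))
    (hval : ∀ i ω, β i ω = 0 ∨ β i ω = 1)
    (hβp : ∀ i, μ {ω | β i ω = 1} = ENNReal.ofReal (2 / 3))
    (hindep : iIndepFun β μ) :
    (∀ c : ℕ → ℝ, (∀ i, 0 ≤ c i) → (∑' i, c i) = 1 →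
      (μ {ω | (2 : ℝ) / 3 ≤ ∑' i, c i * β i ω}).toReal ≤ 20 / 27) ∧
    (μ {ω | (2 : ℝ) / 3 ≤
        ∑' i, (if i < 3 then (1 : ℝ) / 3 else 0) * β i ω}).toReal = 20 / 27 ∧
    (∑ j ∈ Finset.Icc 2 3, (Nat.choose 3 j : ℝ) * (2 / 3) ^ j * (1 / 3) ^ (3 - j))
      = 20 / 27 ∧
    (2 : ℝ) / 3 < 20 / 27 := by
  refine ⟨fun c hc hc1 => measureReal_two_thirds_le_tsum_mul_le hmeas hval hβp hindep hc hc1,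
    measureReal_three_equal_stakes_eq hmeas hval hβp hindep, ?_, by norm_num⟩
  rw [show Finset.Icc 2 3 = ({2, 3} : Finset ℕ) from rfl, sum_pair (by norm_num)]
  norm_num [Nat.choose]
end

section
/- Fix an odd n and p ≥ 1/2. For any intersecting family F of subsets of {1,...,n}, p(F) ≤ p(F_{>n/2}), where F_{>n/2} is the family of all subsets of cardinality greater than n/2. -/
/-!
Send each set to whichever of itself and its complement has more than `n / 2` elements. For odd
`n` this lands in `F_{>n/2}`, and for `p ≥ 1/2` it does not decrease `p(V)`. An intersecting
family never contains a set together with its complement, so the map is injective on it, and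
hence `p(F) ≤ p(image of F) ≤ p(F_{>n/2})`.
-/

open Finset

section Majority

variable {α : Type*} [Fintype α] [DecidableEq α]

def majoritySide (s : Finset α) : Finset α :=
  if Fintype.card α < 2 * #s then s else sᶜ

theorem lt_two_mul_card_majoritySide (hα : Odd (Fintype.card α)) (s : Finset α) :
    Fintype.card α < 2 * #(majoritySide s) := by
  unfold majoritySide
  split_ifs with h
  · exact h
  · have hne : 2 * #s ≠ Fintype.card α := fun he =>
      Nat.not_even_iff_odd.mpr hα ⟨#s, by omega⟩
    have := card_le_univ s
    rw [card_compl]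
    omega

theorem Set.Intersecting.injOn_majoritySide {𝒜 : Set (Finset α)} (h𝒜 : 𝒜.Intersecting) :
    Set.InjOn majoritySide 𝒜 := by
  intro s hs t ht hst
  unfold majoritySide at hst
  split_ifs at hst
  · exact hst
  · exact absurd (hst ▸ hs) (h𝒜.compl_notMem ht)
  · exact absurd (hst ▸ ht) (h𝒜.compl_notMem hs)
  · exact compl_injective hst

end Majority

theorem pow_mul_pow_sub_le_pow_sub_mul_pow {R : Type*} [CommSemiring R] [PartialOrder R]
    [IsOrderedRing R] {p q : R} (hq : 0 ≤ q) (hqp : q ≤ p) {k n : ℕ} (hk : 2 * k ≤ n) :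
    p ^ k * q ^ (n - k) ≤ p ^ (n - k) * q ^ k := by
  calc p ^ k * q ^ (n - k) = (p ^ k * q ^ k) * q ^ (n - 2 * k) := by
        rw [mul_assoc, ← pow_add]; congr 2; omega
    _ ≤ (p ^ k * q ^ k) * p ^ (n - 2 * k) := by
        gcongr
        exact mul_nonneg (pow_nonneg (hq.trans hqp) k) (pow_nonneg hq k)
    _ = p ^ (n - k) * q ^ k := by
        rw [mul_right_comm, ← pow_add]; congr 2; omega

section Weight

variable {α : Type*} [Fintype α] {R : Type*} [CommRing R] [LinearOrder R]
  [IsStrictOrderedRing R]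

/-- The probability of `s` under the product measure in which each point lies in the set with
probability `p`. -/
def bernoulliWeight (p : R) (s : Finset α) : R :=
  p ^ #s * (1 - p) ^ (Fintype.card α - #s)

variable {p : R}

theorem bernoulliWeight_nonneg (hp0 : 0 ≤ p) (hp1 : p ≤ 1) (s : Finset α) :
    0 ≤ bernoulliWeight p s :=
  mul_nonneg (pow_nonneg hp0 _) (pow_nonneg (sub_nonneg.mpr hp1) _)

theorem bernoulliWeight_le_majoritySide [DecidableEq α] (hp : 1 - p ≤ p) (hp1 : p ≤ 1)
    (s : Finset α) :
    bernoulliWeight p s ≤ bernoulliWeight p (majoritySide s) := by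
  unfold majoritySide
  split_ifs with h
  · exact le_rfl
  · have hs := card_le_univ s
    rw [bernoulliWeight, bernoulliWeight, card_compl, Nat.sub_sub_self hs]
    exact pow_mul_pow_sub_le_pow_sub_mul_pow (sub_nonneg.mpr hp1) hp (by omega)

theorem Set.Intersecting.sum_bernoulliWeight_le [DecidableEq α] (hα : Odd (Fintype.card α))
    (hp : 1 - p ≤ p) (hp1 : p ≤ 1) {𝒜 : Finset (Finset α)}
    (h𝒜 : (𝒜 : Set (Finset α)).Intersecting) :
    ∑ s ∈ 𝒜, bernoulliWeight p s ≤
      ∑ s ∈ Finset.univ.filter (fun s : Finset α => Fintype.card α < 2 * #s),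
        bernoulliWeight p s := by
  have hp0 : 0 ≤ p := by linarith
  calc ∑ s ∈ 𝒜, bernoulliWeight p s
      ≤ ∑ s ∈ 𝒜, bernoulliWeight p (majoritySide s) :=
        sum_le_sum fun s _ => bernoulliWeight_le_majoritySide hp hp1 s
    _ = ∑ s ∈ 𝒜.image majoritySide, bernoulliWeight p s :=
        (sum_image h𝒜.injOn_majoritySide).symm
    _ ≤ _ := by
        refine sum_le_sum_of_subset_of_nonneg ?_ fun s _ _ => bernoulliWeight_nonneg hp0 hp1 s
        intro t ht
        obtain ⟨s, -, rfl⟩ := Finset.mem_image.mp ht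
        exact Finset.mem_filter.mpr ⟨Finset.mem_univ _, lt_two_mul_card_majoritySide hα s⟩

end Weight

/-- **Fishburn et al., favorable case.** Let `n` be odd and `1/2 ≤ p ≤ 1`. For any
intersecting family `F` of subsets of `{1,...,n}`, with `p(V) = p^|V| (1-p)^(n-|V|)`,
we have `p(F) ≤ p(F_{>n/2})` where `F_{>n/2}` is the family of subsets of cardinality
greater than `n/2`. -/
theorem intersecting_family_weight_le_majority (n : ℕ) (hn : Odd n) (p : ℝ)
    (hp : 1 / 2 ≤ p) (hp1 : p ≤ 1)
    (F : Finset (Finset (Fin n)))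
    (hF : ∀ A ∈ F, ∀ B ∈ F, (A ∩ B).Nonempty) :
    (∑ V ∈ F, p ^ V.card * (1 - p) ^ (n - V.card)) ≤
      ∑ V ∈ Finset.univ.filter (fun V : Finset (Fin n) => n < 2 * V.card),
        p ^ V.card * (1 - p) ^ (n - V.card) := by
  have hF_int : (F : Set (Finset (Fin n))).Intersecting := fun A hA B hB =>
    not_disjoint_iff_nonempty_inter.mpr (hF A hA B hB)
  simpa only [bernoulliWeight, Fintype.card_fin] using
    hF_int.sum_bernoulliWeight_le (p := p) (by rwa [Fintype.card_fin]) (by linarith) hp1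
end

section
/- If p ≤ 1/2 < t ≤ 1, then for any nonnegative sequence (c_i) summing to 1, P(Σ c_i β_i ≥ t) ≤ p; i.e., bold play with a single stake c_1 = 1 is optimal. -/
open MeasureTheory ProbabilityTheory Finset

/-!
Write `F_n(w) = P(∑_{i<n} c_i β_i ≥ w)` and `S_n = ∑_{i<n} c_i`. Conditioning on the last bet gives
`F_{n+1}(w) = p F_n(w - c_n) + (1 - p) F_n(w)`, and for `p ≤ 1/2` this recursion preserves the
two-threshold bound `p F_n(y) + (1 - p) F_n(x) ≤ p` for all `y ≤ x` with `S_n < x + y`: the new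
combination is `p` times the old bound at `(x, y - c_n)` plus `1 - p` times the old bound at the
sorted pair `{x - c_n, y}`, up to a correction `(1 - p)(1 - 2p)(F_n(x) - F_n(z)) ≤ 0` with
`z = max (x - c_n) y ≤ x`.
Taking `x = y` shows that any event "the stakes reach more than half of their total" has
probability at most `p`; for a threshold `t > 1/2` the tail of the infinite sequence is absorbed
by truncating at an `n` with `S_n > 2 - 2t`.
-/

def TwoThresholdBound (p S : ℝ) (F : ℝ → ℝ) : Prop :=
  ∀ x y, y ≤ x → S < x + y → p * F y + (1 - p) * F x ≤ p

section TwoThresholdBound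

variable {p : ℝ}

lemma twoThresholdBound_zero (hp0 : 0 ≤ p) {F : ℝ → ℝ} (hF1 : ∀ w, F w ≤ 1)
    (hFpos : ∀ w, 0 < w → F w = 0) : TwoThresholdBound p 0 F := by
  intro x y hyx hxy
  rw [hFpos x (by linarith)]
  nlinarith [hF1 y]

lemma TwoThresholdBound.step (hp0 : 0 ≤ p) (hp : p ≤ 1 / 2) {S c : ℝ} (hc : 0 ≤ c)
    {F : ℝ → ℝ} (hF : Antitone F) (h : TwoThresholdBound p S F) :
    TwoThresholdBound p (S + c) (fun w => p * F (w - c) + (1 - p) * F w) := by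
  intro x y hyx hxy
  have hq : 0 ≤ 1 - p := by linarith
  have hpq : 0 ≤ (1 - p) * (1 - 2 * p) := by nlinarith
  have hlow := mul_le_mul_of_nonneg_left (h x (y - c) (by linarith) (by linarith)) hp0
  rcases le_total y (x - c) with hle | hle
  · have hhigh := mul_le_mul_of_nonneg_left (h (x - c) y hle (by linarith)) hq
    have hmono := mul_le_mul_of_nonneg_left (hF (by linarith : x - c ≤ x)) hpq
    nlinarith
  · have hhigh := mul_le_mul_of_nonneg_left (h y (x - c) hle (by linarith)) hq
    have hmono := mul_le_mul_of_nonneg_left (hF hyx) hpq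
    nlinarith

lemma TwoThresholdBound.apply_le {S : ℝ} {F : ℝ → ℝ} (h : TwoThresholdBound p S F) {x : ℝ}
    (hx : S < 2 * x) : F x ≤ p := by
  linarith [h x x le_rfl (by linarith)]

end TwoThresholdBound

section Bets

variable {Ω : Type*} [MeasurableSpace Ω] {μ : Measure Ω}

lemma measureReal_setOf_le_add_mul_eq [IsProbabilityMeasure μ] {T b : Ω → ℝ}
    (hb : Measurable b) (hb01 : ∀ ω, b ω = 0 ∨ b ω = 1) (hTb : IndepFun T b μ) {p : ℝ}
    (hbp : μ.real {ω | b ω = 1} = p) (c w : ℝ) :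
    μ.real {ω | w ≤ T ω + c * b ω}
      = p * μ.real {ω | w - c ≤ T ω} + (1 - p) * μ.real {ω | w ≤ T ω} := by
  have hB : MeasurableSet (b ⁻¹' {1}) := hb (measurableSet_singleton 1)
  have hwin : {ω | w ≤ T ω + c * b ω} ∩ b ⁻¹' {1} = T ⁻¹' Set.Ici (w - c) ∩ b ⁻¹' {1} := by
    ext ω
    rcases hb01 ω with h | h <;> simp [h]
  have hlose : {ω | w ≤ T ω + c * b ω} \ b ⁻¹' {1} = T ⁻¹' Set.Ici w ∩ b ⁻¹' {0} := by
    ext ω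
    rcases hb01 ω with h | h <;> simp [h]
  have hlose_prob : μ.real (b ⁻¹' {0}) = 1 - p := by
    have : b ⁻¹' {0} = (b ⁻¹' {1})ᶜ := by
      ext ω
      rcases hb01 ω with h | h <;> simp [h]
    rw [this, probReal_compl_eq_one_sub hB, ← hbp]
    rfl
  rw [← measureReal_inter_add_sdiff hB, hwin, hlose, measureReal_def, measureReal_def,
    hTb.measure_inter_preimage_eq_mul _ _ measurableSet_Ici (measurableSet_singleton _),
    hTb.measure_inter_preimage_eq_mul _ _ measurableSet_Ici (measurableSet_singleton _),
    ENNReal.toReal_mul, ENNReal.toReal_mul]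
  change μ.real {ω | w - c ≤ T ω} * μ.real {ω | b ω = 1}
    + μ.real {ω | w ≤ T ω} * μ.real (b ⁻¹' {0}) = _
  rw [hbp, hlose_prob]
  ring

lemma ProbabilityTheory.iIndepFun.indepFun_sum_mul_of_notMem {β : ℕ → Ω → ℝ}
    (hmeas : ∀ i, Measurable (β i)) (hindep : iIndepFun β μ) (c : ℕ → ℝ) {s : Finset ℕ} {n : ℕ}
    (hn : n ∉ s) :
    IndepFun (fun ω => ∑ i ∈ s, c i * β i ω) (β n) μ := by
  have hsum : Measurable fun x : s → ℝ => ∑ i : s, c i * x i := by fun_prop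
  have heval : Measurable fun x : ({n} : Finset ℕ) → ℝ => x ⟨n, mem_singleton_self n⟩ :=
    measurable_pi_apply _
  convert (hindep.indepFun_finset s {n} (disjoint_singleton_right.mpr hn) hmeas).comp hsum heval
    using 1
  · ext ω
    exact (sum_coe_sort s fun i => c i * β i ω).symm
  · rfl

lemma twoThresholdBound_measureReal_le_sum [IsProbabilityMeasure μ] {p : ℝ} {β : ℕ → Ω → ℝ}
    (hmeas : ∀ i, Measurable (β i)) (hval : ∀ i ω, β i ω = 0 ∨ β i ω = 1)
    (hβp : ∀ i, μ.real {ω | β i ω = 1} = p) (hindep : iIndepFun β μ) (hp0 : 0 ≤ p)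
    (hp : p ≤ 1 / 2) {c : ℕ → ℝ} (hc : ∀ i, 0 ≤ c i) (n : ℕ) :
    TwoThresholdBound p (∑ i ∈ range n, c i)
      (fun w => μ.real {ω | w ≤ ∑ i ∈ range n, c i * β i ω}) := by
  induction n with
  | zero =>
    refine twoThresholdBound_zero hp0 (fun w => measureReal_le_one) fun w hw => ?_
    simp [not_le.mpr hw]
  | succ n ih =>
    have hrec : (fun w => μ.real {ω | w ≤ ∑ i ∈ range (n + 1), c i * β i ω}) = fun w =>
        p * μ.real {ω | w - c n ≤ ∑ i ∈ range n, c i * β i ω}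
          + (1 - p) * μ.real {ω | w ≤ ∑ i ∈ range n, c i * β i ω} := by
      ext w
      simp only [sum_range_succ]
      exact measureReal_setOf_le_add_mul_eq (hmeas n) (hval n)
        (hindep.indepFun_sum_mul_of_notMem hmeas c notMem_range_self) (hβp n) (c n) w
    have hanti : Antitone fun w => μ.real {ω | w ≤ ∑ i ∈ range n, c i * β i ω} :=
      fun v w hvw => measureReal_mono fun ω (hω : w ≤ _) => hvw.trans hω
    rw [sum_range_succ, hrec]
    exact ih.step hp0 hp (hc n) hanti

end Bets

lemma tsum_mul_le_sum_mul_add {c b : ℕ → ℝ} (hc : ∀ i, 0 ≤ c i) (hcs : Summable c)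
    (hb0 : ∀ i, 0 ≤ b i) (hb1 : ∀ i, b i ≤ 1) (n : ℕ) :
    ∑' i, c i * b i ≤ ∑ i ∈ range n, c i * b i + (∑' i, c i - ∑ i ∈ range n, c i) := by
  have hcb : Summable fun i => c i * b i :=
    .of_nonneg_of_le (fun i => mul_nonneg (hc i) (hb0 i))
      (fun i => mul_le_of_le_one_right (hc i) (hb1 i)) hcs
  have hloss : ∑ i ∈ range n, c i * (1 - b i) ≤ ∑' i, c i * (1 - b i) :=
    (hcs.sub hcb).congr (fun i => by ring) |>.sum_le_tsum _
      fun i _ => mul_nonneg (hc i) (sub_nonneg.mpr (hb1 i))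
  have htsum : ∑' i, c i * (1 - b i) = ∑' i, c i - ∑' i, c i * b i := by
    simp only [mul_sub, mul_one]
    exact hcs.tsum_sub hcb
  simp only [mul_sub, mul_one, sum_sub_distrib] at hloss htsum
  linarith

/-- **High threshold: bold play is optimal.** If `p ≤ 1/2 < t ≤ 1`, then for any
nonnegative stake sequence `(c i)` summing to `1` placed on iid Bernoulli(p) bets,
the probability of reaching the threshold `t` is at most `p`; bold play, staking
everything on a single bet, attains `p`. -/
theorem boldPlay_optimal_high_threshold {Ω : Type*} [MeasurableSpace Ω]
    (μ : Measure Ω) [IsProbabilityMeasure μ] (p t : ℝ)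
    (β : ℕ → Ω → ℝ) (hmeas : ∀ i, Measurable (β i))
    (hval : ∀ i ω, β i ω = 0 ∨ β i ω = 1)
    (hβp : ∀ i, μ {ω | β i ω = 1} = ENNReal.ofReal p)
    (hindep : iIndepFun β μ)
    (hp0 : 0 ≤ p) (hp : p ≤ 1 / 2) (ht : 1 / 2 < t) (ht1 : t ≤ 1) :
    (∀ c : ℕ → ℝ, (∀ i, 0 ≤ c i) → (∑' i, c i) = 1 →
      (μ {ω | t ≤ ∑' i, c i * β i ω}).toReal ≤ p) ∧
    (μ {ω | t ≤ β 0 ω}).toReal = p := by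
  have hβp' : ∀ i, μ.real {ω | β i ω = 1} = p := fun i => by
    rw [measureReal_def, hβp i, ENNReal.toReal_ofReal hp0]
  refine ⟨fun c hc hsum => ?_, ?_⟩
  · have hcs : Summable c := by
      by_contra h
      rw [tsum_eq_zero_of_not_summable h] at hsum
      exact zero_ne_one hsum
    obtain ⟨n, hn⟩ : ∃ n, 2 - 2 * t < ∑ i ∈ range n, c i := by
      have := hsum ▸ hcs.hasSum.tendsto_sum_nat
      exact (this.eventually (eventually_gt_nhds (by linarith))).exists
    have hsub : {ω | t ≤ ∑' i, c i * β i ω} ⊆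
        {ω | t - (1 - ∑ i ∈ range n, c i) ≤ ∑ i ∈ range n, c i * β i ω} := fun ω hω => by
      have hβ01 : ∀ i, 0 ≤ β i ω ∧ β i ω ≤ 1 := fun i => by
        rcases hval i ω with h | h <;> simp [h]
      have := tsum_mul_le_sum_mul_add hc hcs (fun i => (hβ01 i).1) (fun i => (hβ01 i).2) n
      simp only [Set.mem_ofPred_eq] at hω ⊢
      linarith
    calc (μ {ω | t ≤ ∑' i, c i * β i ω}).toReal
        ≤ μ.real {ω | t - (1 - ∑ i ∈ range n, c i) ≤ ∑ i ∈ range n, c i * β i ω} :=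
          measureReal_mono hsub
      _ ≤ p := (twoThresholdBound_measureReal_le_sum hmeas hval hβp' hindep hp0 hp hc n).apply_le
          (by linarith)
  · have hset : {ω | t ≤ β 0 ω} = {ω | β 0 ω = 1} := by
      ext ω
      rcases hval 0 ω with h | h <;> simp [h] <;> linarith
    rw [← measureReal_def, hset, hβp']
end

section
/- If 1/2 < p ≤ t ≤ 2/3, then bold play is not optimal: there exists an odd integer n = 2k+1 such that with c_1 = ... = c_n = 1/n, P(Σ c_i β_i ≥ t) = P(Bin(n,p) ≥ (n+1)/2) > p. -/
/-!
Take three equal stakes `1/3`. Since `1/2 < t ≤ 2/3`, the mean of three `0/1` outcomes reaches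
`t` exactly when at least two bets win. By independence every pattern `s ⊆ {0, …, n-1}` of wins
has probability `p ^ #s * (1 - p) ^ (n - #s)`, so the number of wins is binomial, and the
majority-of-three probability `3p² - 2p³` exceeds `p` because the difference is
`p (1 - p) (2p - 1) > 0`.
-/

open MeasureTheory ProbabilityTheory Finset

lemma le_natCast_div_iff {t : ℝ} {m n c : ℕ} (hlo : ((m : ℝ) - 1) / n < t)
    (hhi : t ≤ m / n) : t ≤ c / n ↔ m ≤ c := by
  constructor
  · intro h
    by_contra! hcm
    have hc : (c : ℝ) + 1 ≤ m := by exact_mod_cast Nat.succ_le_of_lt hcm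
    have : (c : ℝ) / n ≤ (m - 1) / n :=
      div_le_div_of_nonneg_right (by linarith) (Nat.cast_nonneg n)
    linarith
  · intro h
    exact hhi.trans (div_le_div_of_nonneg_right (by exact_mod_cast h) (Nat.cast_nonneg n))

lemma sum_powerset_filter_le_card (m n : ℕ) (g : ℕ → ℝ) :
    ∑ s ∈ (range n).powerset with m ≤ #s, g #s = ∑ j ∈ Icc m n, n.choose j * g j := by
  rw [sum_filter, sum_powerset_apply_card (fun j => if m ≤ j then g j else 0), card_range]
  simp_rw [nsmul_eq_mul, mul_ite, mul_zero]
  rw [← sum_filter]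
  congr 1
  ext j
  simp [and_comm]

section Bernoulli

variable {Ω : Type*} {β : ℕ → Ω → ℝ}

noncomputable def successes (β : ℕ → Ω → ℝ) (n : ℕ) (ω : Ω) : Finset ℕ :=
  {i ∈ range n | β i ω = 1}

lemma sum_eq_card_successes (hval : ∀ i ω, β i ω = 0 ∨ β i ω = 1) (n : ℕ) (ω : Ω) :
    ∑ i ∈ range n, β i ω = #(successes β n ω) := by
  rw [successes, natCast_card_filter]
  refine sum_congr rfl fun i _ => ?_
  rcases hval i ω with h | h <;> simp [h]

lemma successes_preimage_singleton (hval : ∀ i ω, β i ω = 0 ∨ β i ω = 1) {n : ℕ}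
    {s : Finset ℕ} (hs : s ⊆ range n) :
    successes β n ⁻¹' {s} = ⋂ i ∈ range n, β i ⁻¹' (if i ∈ s then {1} else {0}) := by
  ext ω
  simp only [Set.mem_preimage, Set.mem_singleton_iff, Set.mem_iInter]
  constructor
  · rintro rfl i hi
    rcases hval i ω with h | h <;> simp [successes, h, hi]
  · intro h
    ext i
    by_cases hi : i ∈ range n
    · have := h i hi
      by_cases his : i ∈ s <;> simp_all [successes]
    · simp only [successes, mem_filter, hi, false_and, false_iff]
      exact fun his => hi (hs his)

variable [MeasurableSpace Ω] {μ : Measure Ω} [IsProbabilityMeasure μ] {p : ℝ}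

lemma measure_preimage_zero (hmeas : ∀ i, Measurable (β i))
    (hval : ∀ i ω, β i ω = 0 ∨ β i ω = 1) (hβp : ∀ i, μ {ω | β i ω = 1} = ENNReal.ofReal p)
    (hp : 0 ≤ p) (i : ℕ) : μ (β i ⁻¹' {0}) = ENNReal.ofReal (1 - p) := by
  have hcompl : β i ⁻¹' {0} = {ω | β i ω = 1}ᶜ := by
    ext ω
    rcases hval i ω with h | h <;> simp [h]
  rw [hcompl, prob_compl_eq_one_sub (s := {ω | β i ω = 1}) (hmeas i (measurableSet_singleton 1)),
    hβp, ENNReal.ofReal_sub 1 hp, ENNReal.ofReal_one]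

lemma measure_successes_eq (hmeas : ∀ i, Measurable (β i))
    (hval : ∀ i ω, β i ω = 0 ∨ β i ω = 1) (hβp : ∀ i, μ {ω | β i ω = 1} = ENNReal.ofReal p)
    (hindep : iIndepFun β μ) (hp : 0 ≤ p) (hp1 : p ≤ 1) {n : ℕ} {s : Finset ℕ}
    (hs : s ⊆ range n) :
    μ (successes β n ⁻¹' {s}) = ENNReal.ofReal (p ^ #s * (1 - p) ^ (n - #s)) := by
  rw [successes_preimage_singleton hval hs, hindep.measure_inter_preimage_eq_mul _
    fun i _ => by split_ifs <;> exact measurableSet_singleton _]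
  have hfactor : ∀ i ∈ range n, μ (β i ⁻¹' (if i ∈ s then {1} else {0})) =
      if i ∈ s then ENNReal.ofReal p else ENNReal.ofReal (1 - p) := by
    intro i _
    split_ifs
    · exact hβp i
    · exact measure_preimage_zero hmeas hval hβp hp i
  have hfilter : {i ∈ range n | i ∈ s} = s := by
    rw [filter_mem_eq_inter, inter_eq_right.mpr hs]
  rw [prod_congr rfl hfactor, prod_ite, prod_const, prod_const, hfilter, filter_not, hfilter,
    card_sdiff_of_subset hs, card_range, ← ENNReal.ofReal_pow hp,
    ← ENNReal.ofReal_pow (sub_nonneg.mpr hp1), ← ENNReal.ofReal_mul (by positivity)]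

lemma measure_le_sum_eq_binomial_tail (hmeas : ∀ i, Measurable (β i))
    (hval : ∀ i ω, β i ω = 0 ∨ β i ω = 1) (hβp : ∀ i, μ {ω | β i ω = 1} = ENNReal.ofReal p)
    (hindep : iIndepFun β μ) (hp : 0 ≤ p) (hp1 : p ≤ 1) (m n : ℕ) :
    (μ {ω | (m : ℝ) ≤ ∑ i ∈ range n, β i ω}).toReal =
      ∑ j ∈ Icc m n, n.choose j * p ^ j * (1 - p) ^ (n - j) := by
  have hq : 0 ≤ 1 - p := sub_nonneg.mpr hp1
  set T := {s ∈ (range n).powerset | m ≤ #s}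
  have hT : ∀ s ∈ T, s ⊆ range n := fun s hs => mem_powerset.mp (mem_filter.mp hs).1
  have hevent : {ω | (m : ℝ) ≤ ∑ i ∈ range n, β i ω} = successes β n ⁻¹' T := by
    ext ω
    simp [T, sum_eq_card_successes hval, successes]
  have hfiber : ∀ s ∈ T, MeasurableSet (successes β n ⁻¹' {s}) := fun s hs => by
    rw [successes_preimage_singleton hval (hT s hs)]
    exact Finset.measurableSet_biInter _ fun i _ => hmeas i (by split_ifs <;> simp)
  rw [hevent, ← sum_measure_preimage_singleton T hfiber,
    sum_congr rfl fun s hs => measure_successes_eq hmeas hval hβp hindep hp hp1 (hT s hs),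
    ← ENNReal.ofReal_sum_of_nonneg fun s _ => by positivity,
    ENNReal.toReal_ofReal (sum_nonneg fun s _ => by positivity),
    sum_powerset_filter_le_card m n fun j => p ^ j * (1 - p) ^ (n - j)]
  simp_rw [mul_assoc]

end Bernoulli

lemma lt_sum_Icc_two_three_choose {p : ℝ} (hp : 1 / 2 < p) (hp1 : p < 1) :
    p < ∑ j ∈ Icc 2 3, (Nat.choose 3 j : ℝ) * p ^ j * (1 - p) ^ (3 - j) := by
  rw [show Icc 2 3 = {2, 3} from rfl, sum_pair (by norm_num)]
  norm_num
  nlinarith [mul_pos (mul_pos (by linarith : 0 < p) (sub_pos.mpr hp1))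
    (by linarith : 0 < 2 * p - 1)]

/-- **Bold play is not optimal for `1/2 < p ≤ t ≤ 2/3`.** There is an odd integer
`n = 2k+1` such that placing equal stakes `1/n` on `n` iid Bernoulli(p) bets reaches
the threshold `t` with probability `P(Bin(n,p) ≥ (n+1)/2)`, which is strictly larger
than the bold play value `p`. -/
theorem boldPlay_not_optimal {Ω : Type*} [MeasurableSpace Ω]
    (μ : Measure Ω) [IsProbabilityMeasure μ] (p t : ℝ)
    (β : ℕ → Ω → ℝ) (hmeas : ∀ i, Measurable (β i))
    (hval : ∀ i ω, β i ω = 0 ∨ β i ω = 1)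
    (hβp : ∀ i, μ {ω | β i ω = 1} = ENNReal.ofReal p)
    (hindep : iIndepFun β μ)
    (hp : 1 / 2 < p) (hpt : p ≤ t) (ht : t ≤ 2 / 3) :
    ∃ k : ℕ, 0 < k ∧
      (μ {ω | t ≤ ∑ i ∈ Finset.range (2 * k + 1),
          (1 / (2 * k + 1 : ℝ)) * β i ω}).toReal =
        (∑ j ∈ Finset.Icc (k + 1) (2 * k + 1),
          (Nat.choose (2 * k + 1) j : ℝ) * p ^ j * (1 - p) ^ (2 * k + 1 - j)) ∧
      p < (μ {ω | t ≤ ∑ i ∈ Finset.range (2 * k + 1),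
          (1 / (2 * k + 1 : ℝ)) * β i ω}).toReal := by
  have hevent : {ω | t ≤ ∑ i ∈ range (2 * 1 + 1), (1 / (2 * ((1 : ℕ) : ℝ) + 1)) * β i ω} =
      {ω | ((2 : ℕ) : ℝ) ≤ ∑ i ∈ range 3, β i ω} := by
    ext ω
    have hmean : ∑ i ∈ range (2 * 1 + 1), 1 / (2 * ((1 : ℕ) : ℝ) + 1) * β i ω =
        #(successes β 3 ω) / (3 : ℕ) := by
      rw [← mul_sum, sum_eq_card_successes hval]
      norm_num
      ring
    simp only [Set.mem_ofPred_eq, hmean, sum_eq_card_successes hval, Nat.cast_le]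
    exact le_natCast_div_iff (by norm_num; linarith) (by norm_num; linarith)
  refine ⟨1, one_pos, ?_⟩
  rw [hevent, measure_le_sum_eq_binomial_tail hmeas hval hβp hindep (by linarith) (by linarith)]
  exact ⟨rfl, lt_sum_Icc_two_three_choose hp (by linarith)⟩
end

section
/- For every integer a > 1 and every positive integer k, P(Bin((k+1)a, 1/a) ≥ k+1) < P(Bin(ka, 1/a) ≥ k); that is, the probability of getting at least k successes in ka trials with success probability 1/a is strictly decreasing in k. -/
/-!
Write `Bin((k + 1)a, p) = X + Y` with `X ~ Bin(ka, p)` and `Y ~ Bin(a, p)` independent, `p = 1/a`.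
Conditioning on `X` gives
`P(X + Y ≤ k) - P(X < k) = P(X = k) P(Y = 0) - ∑_{i < k} P(X = i) P(Y ≥ k + 1 - i)`.
Since `k` is the mode of `X`, `P(X = i) < P(X = k)` for `i < k`, and
`∑_{m ≥ 2} P(Y ≥ m) = E Y - P(Y ≥ 1) = P(Y = 0)` because `E Y = a p = 1`;
hence the difference is positive.
-/

open Finset

noncomputable def binomPmf (p : ℝ) (n j : ℕ) : ℝ :=
  n.choose j * p ^ j * (1 - p) ^ (n - j)

/-- `binomCdf p n m = P(Bin(n, p) < m)`, with a strict inequality. -/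
noncomputable def binomCdf (p : ℝ) (n m : ℕ) : ℝ :=
  ∑ j ∈ range m, binomPmf p n j

noncomputable def binomTail (p : ℝ) (n m : ℕ) : ℝ :=
  ∑ j ∈ Icc m n, binomPmf p n j

section
variable {p : ℝ} {n : ℕ}

lemma binomPmf_eq_eval_bernsteinPolynomial (p : ℝ) (n j : ℕ) :
    binomPmf p n j = (bernsteinPolynomial ℝ n j).eval p := by
  simp [binomPmf, bernsteinPolynomial]

lemma binomPmf_nonneg (hp₀ : 0 ≤ p) (hp₁ : p ≤ 1) (j : ℕ) : 0 ≤ binomPmf p n j := by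
  have : 0 ≤ 1 - p := sub_nonneg.2 hp₁
  unfold binomPmf; positivity

lemma binomPmf_pos (hp₀ : 0 < p) (hp₁ : p < 1) {j : ℕ} (hj : j ≤ n) : 0 < binomPmf p n j := by
  have : 0 < (n.choose j : ℝ) := by exact_mod_cast Nat.choose_pos hj
  have : 0 < 1 - p := sub_pos.2 hp₁
  unfold binomPmf; positivity

lemma binomPmf_eq_zero_of_lt {j : ℕ} (hj : n < j) : binomPmf p n j = 0 := by
  simp [binomPmf, Nat.choose_eq_zero_of_lt hj]

lemma sum_range_binomPmf (p : ℝ) (n : ℕ) : ∑ j ∈ range (n + 1), binomPmf p n j = 1 := by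
  simp only [binomPmf_eq_eval_bernsteinPolynomial, ← Polynomial.eval_finsetSum,
    bernsteinPolynomial.sum, Polynomial.eval_one]

lemma sum_range_mul_binomPmf (p : ℝ) (n : ℕ) :
    ∑ j ∈ range (n + 1), j * binomPmf p n j = n * p := by
  have := congrArg (Polynomial.eval p) (bernsteinPolynomial.sum_smul ℝ n)
  simpa [Polynomial.eval_finsetSum, binomPmf_eq_eval_bernsteinPolynomial] using this

lemma binomPmf_add (p : ℝ) (n m j : ℕ) :
    binomPmf p (n + m) j =
      ∑ x ∈ antidiagonal j, binomPmf p n x.1 * binomPmf p m x.2 := by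
  simp only [binomPmf, Nat.add_choose_eq, Nat.cast_sum, Nat.cast_mul, sum_mul]
  refine sum_congr rfl fun ⟨i, l⟩ hil => ?_
  rw [HasAntidiagonal.mem_antidiagonal] at hil
  subst hil
  rcases le_or_gt i n with hi | hi
  · rcases le_or_gt l m with hl | hl
    · rw [show n + m - (i + l) = (n - i) + (m - l) by omega]
      ring
    · simp [Nat.choose_eq_zero_of_lt hl]
  · simp [Nat.choose_eq_zero_of_lt hi]

lemma succ_mul_binomPmf_succ (p : ℝ) (n i : ℕ) :
    (i + 1) * (1 - p) * binomPmf p n (i + 1) = (n - i : ℕ) * p * binomPmf p n i := by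
  rcases le_or_gt n i with h | h
  · simp [Nat.sub_eq_zero_of_le h, binomPmf_eq_zero_of_lt (Nat.lt_succ_of_le h)]
  have hc : (n.choose (i + 1) : ℝ) * (i + 1) = n.choose i * (n - i : ℕ) := by
    exact_mod_cast Nat.choose_succ_right_eq n i
  have hq : (1 - p) ^ (n - i) = (1 - p) ^ (n - (i + 1)) * (1 - p) := by
    rw [← pow_succ]; congr 1; omega
  rw [binomPmf, binomPmf, hq]
  linear_combination p ^ (i + 1) * (1 - p) ^ (n - (i + 1)) * (1 - p) * hc

lemma binomPmf_lt_binomPmf_succ (hp₀ : 0 < p) (hp₁ : p < 1) {i : ℕ}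
    (hi : (i + 1 : ℝ) < (n + 1) * p) : binomPmf p n i < binomPmf p n (i + 1) := by
  have hin : i < n := by
    have : (i + 1 : ℝ) < n + 1 := hi.trans_le (by nlinarith)
    exact_mod_cast (by linarith : (i : ℝ) < n)
  have hratio : (i + 1) * (1 - p) < (n - i : ℕ) * p := by
    rw [Nat.cast_sub hin.le]; linarith
  have hq : 0 < (i + 1) * (1 - p) := by have := sub_pos.2 hp₁; positivity
  refine lt_of_mul_lt_mul_left ?_ hq.le
  rw [succ_mul_binomPmf_succ]
  exact mul_lt_mul_of_pos_right hratio (binomPmf_pos hp₀ hp₁ hin.le)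

lemma binomPmf_lt_of_lt (hp₀ : 0 < p) (hp₁ : p < 1) {i k : ℕ} (hk : (k : ℝ) < (n + 1) * p)
    (hik : i < k) : binomPmf p n i < binomPmf p n k := by
  induction k, hik using Nat.le_induction with
  | base => exact binomPmf_lt_binomPmf_succ hp₀ hp₁ (by exact_mod_cast hk)
  | succ k hik ih =>
    refine (ih ?_).trans (binomPmf_lt_binomPmf_succ hp₀ hp₁ (by exact_mod_cast hk))
    push_cast at hk; linarith

lemma binomCdf_add_binomTail (p : ℝ) (n m : ℕ) : binomCdf p n m + binomTail p n m = 1 := by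
  rw [← sum_range_binomPmf p n, binomCdf, binomTail]
  rcases le_or_gt m (n + 1) with hm | hm
  · rw [← Ico_add_one_right_eq_Icc, sum_range_add_sum_Ico _ hm]
  · rw [Icc_eq_empty (by omega), sum_empty, add_zero]
    refine (sum_subset (range_subset_range.2 hm.le) fun j _ hj => ?_).symm
    exact binomPmf_eq_zero_of_lt (by simpa using hj)

lemma binomTail_nonneg (hp₀ : 0 ≤ p) (hp₁ : p ≤ 1) (m : ℕ) : 0 ≤ binomTail p n m :=
  sum_nonneg fun j _ => binomPmf_nonneg hp₀ hp₁ j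

lemma binomTail_pos (hp₀ : 0 < p) (hp₁ : p < 1) {m : ℕ} (hm : m ≤ n) : 0 < binomTail p n m :=
  sum_pos (fun j hj => binomPmf_pos hp₀ hp₁ (mem_Icc.1 hj).2) ⟨m, by simpa using hm⟩

lemma binomCdf_add (p : ℝ) (n m N : ℕ) :
    binomCdf p (n + m) N = ∑ i ∈ range N, binomPmf p n i * binomCdf p m (N - i) := by
  simp only [binomCdf, binomPmf_add, Nat.sum_antidiagonal_eq_sum_range_succ_mk, mul_sum]
  rw [sum_comm' (t' := range N) (s' := fun i => Ico i N) (fun j i => by simp; omega)]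
  refine sum_congr rfl fun i _ => ?_
  rw [sum_Ico_eq_sum_range]
  simp only [add_tsub_cancel_left]

lemma sum_range_binomTail_succ_le (hp₀ : 0 ≤ p) (hp₁ : p ≤ 1) (K : ℕ) :
    ∑ m ∈ range K, binomTail p n (m + 1) ≤ n * p := by
  rw [← sum_range_mul_binomPmf]
  simp only [binomTail]
  rw [sum_comm' (t' := range (n + 1)) (s' := fun j => range (min j K)) (fun m j => by simp; omega)]
  refine sum_le_sum fun j _ => ?_
  rw [sum_const, card_range, nsmul_eq_mul]
  gcongr
  · exact binomPmf_nonneg hp₀ hp₁ j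
  · exact_mod_cast min_le_left j K

lemma binomTail_add_lt (hp₀ : 0 < p) (hp₁ : p < 1) {a k : ℕ} (ha : 2 ≤ a) (hap : a * p ≤ 1)
    (hk : 0 < k) (hkn : (k : ℝ) < (n + 1) * p) :
    binomTail p (n + a) (k + 1) < binomTail p n k := by
  have hcdf : binomCdf p (n + a) (k + 1) =
      binomCdf p n k - ∑ i ∈ range k, binomPmf p n i * binomTail p a (k + 1 - i) +
        binomPmf p n k * binomCdf p a 1 := by
    have hc (m : ℕ) : binomCdf p a m = 1 - binomTail p a m :=
      eq_sub_of_add_eq (binomCdf_add_binomTail p a m)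
    rw [binomCdf_add, sum_range_succ, Nat.add_sub_cancel_left]
    simp only [hc (_ - _), mul_sub, mul_one, sum_sub_distrib]
    rfl
  have hreflect :
      ∑ i ∈ range k, binomTail p a (k + 1 - i) = ∑ j ∈ range k, binomTail p a (j + 1 + 1) := by
    rw [← sum_range_reflect]
    exact sum_congr rfl fun j hj => by rw [mem_range] at hj; congr 1; omega
  have htail_sum : ∑ j ∈ range k, binomTail p a (j + 1 + 1) ≤ binomCdf p a 1 := by
    have := sum_range_binomTail_succ_le (n := a) hp₀.le hp₁.le (k + 1)
    rw [sum_range_succ', zero_add] at this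
    linarith [binomCdf_add_binomTail p a 1]
  have hlt : ∑ i ∈ range k, binomPmf p n i * binomTail p a (k + 1 - i) <
      binomPmf p n k * binomCdf p a 1 := by
    calc ∑ i ∈ range k, binomPmf p n i * binomTail p a (k + 1 - i)
        < ∑ i ∈ range k, binomPmf p n k * binomTail p a (k + 1 - i) := by
          refine sum_lt_sum (fun i hi => ?_) ⟨k - 1, by simp [hk], ?_⟩
          · exact mul_le_mul_of_nonneg_right (binomPmf_lt_of_lt hp₀ hp₁ hkn (mem_range.1 hi)).le
              (binomTail_nonneg hp₀.le hp₁.le _)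
          · refine mul_lt_mul_of_pos_right (binomPmf_lt_of_lt hp₀ hp₁ hkn (by omega)) ?_
            exact binomTail_pos hp₀ hp₁ (by omega)
      _ ≤ binomPmf p n k * binomCdf p a 1 := by
          rw [← mul_sum, hreflect]
          exact mul_le_mul_of_nonneg_left htail_sum (binomPmf_nonneg hp₀.le hp₁.le k)
  have h₁ := binomCdf_add_binomTail p n k
  have h₂ := binomCdf_add_binomTail p (n + a) (k + 1)
  linarith

end

/-- **Chaundy–Bullard theorem (Pepys–Newton problem).** For every integer `a > 1` and
positive integer `k`, `P(Bin((k+1)a, 1/a) ≥ k+1) < P(Bin(ka, 1/a) ≥ k)`: the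
probability of at least `k` successes in `ka` trials with success probability `1/a`
is strictly decreasing in `k`. -/
theorem binomial_tail_strict_anti (a k : ℕ) (ha : 1 < a) (hk : 0 < k) :
    (∑ j ∈ Finset.Icc (k + 1) ((k + 1) * a),
        (Nat.choose ((k + 1) * a) j : ℝ) * (1 / a) ^ j * (1 - 1 / a) ^ ((k + 1) * a - j))
      <
    (∑ j ∈ Finset.Icc k (k * a),
        (Nat.choose (k * a) j : ℝ) * (1 / a) ^ j * (1 - 1 / a) ^ (k * a - j)) := by
  have ha₀ : (0 : ℝ) < a := by positivity
  have ha₁ : (1 : ℝ) < a := by exact_mod_cast ha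
  have h := binomTail_add_lt (n := k * a) (one_div_pos.2 ha₀) ((div_lt_one ha₀).2 ha₁) ha
    (mul_one_div_cancel ha₀.ne').le hk (by push_cast; field_simp; linarith)
  rwa [← add_one_mul] at h
end
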